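/- arXiv:2506.12604 — 12 statements merged into one kernel-verified Lean document; each statement's English description precedes it below -/
import Mathlib

section
/- Suppose θ̄·A'(1) < 1 − γ. Then there exists λ ∈ (0,1) with Π^s(λ) > Π^s(1); consequently, every λ* ∈ (0,1] that maximizes Π^s over (0,1] satisfies λ* < 1 (optimal single certification is imperfect). -/
open Set

/-- Effective virtual value `R(x, λ) = (x + (1−λ)/λ)·A(λ) − γ/λ`. -/
noncomputable def R (A : ℝ → ℝ) (γ x l : ℝ) : ℝ := (x + (1 - l) / l) * A l - γ / l

/-- Single-certificate views `V^{s,λ}(θ) = (c')⁻¹(max{R(φ(θ),λ), 0})`,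
where `cinv` denotes the inverse of the marginal cost `c'`. -/
noncomputable def Vs (A cinv : ℝ → ℝ) (γ x l : ℝ) : ℝ := cinv (max (R A γ x l) 0)

/-- Single-certificate profit `Π^s(λ)`. -/
noncomputable def Pis (A c cinv φ f : ℝ → ℝ) (γ θb l : ℝ) : ℝ :=
  ∫ θ in (0:ℝ)..θb,
    (R A γ (φ θ) l * Vs A cinv γ (φ θ) l - c (Vs A cinv γ (φ θ) l)) * f θ

/-- Auxiliary: pointwise maximized profit as a function of the effective virtual value. -/
noncomputable def gaux (c cinv : ℝ → ℝ) (r : ℝ) : ℝ :=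
  r * cinv (max r 0) - c (cinv (max r 0))

/-- Auxiliary: the integrand of `Pis`. -/
noncomputable def Gg (A c cinv φ f : ℝ → ℝ) (γ l θ : ℝ) : ℝ :=
  gaux c cinv (R A γ (φ θ) l) * f θ

/-- if `θ̄·A'(1) < 1 − γ`, there is an imperfect certificate strictly
better than perfect certification, so every optimal single certificate is imperfect. -/
theorem stmt0
    (θb γ : ℝ) (A A' c c' cinv φ f : ℝ → ℝ)
    (hθb : 0 < θb) (hγ0 : 0 < γ) (hγ1 : γ < 1) (hγθ : γ < θb)
    (hA0 : A 0 = 0) (hA1 : A 1 = 1)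
    (hAmono : StrictMonoOn A (Icc 0 1))
    (hAderiv : ∀ y ∈ Icc (0:ℝ) 1, HasDerivWithinAt A (A' y) (Icc 0 1) y)
    (hc0 : c 0 = 0) (hc'0 : c' 0 = 0)
    (hcmono : StrictMonoOn c (Ici 0))
    (hcconv : StrictConvexOn ℝ (Ici 0) c)
    (hcderiv : ∀ v ∈ Ici (0:ℝ), HasDerivWithinAt c (c' v) (Ici 0) v)
    (hc'top : Filter.Tendsto c' Filter.atTop Filter.atTop)
    (hcinv₁ : ∀ v, 0 ≤ v → cinv (c' v) = v)
    (hcinv₂ : ∀ y, 0 ≤ y → 0 ≤ cinv y ∧ c' (cinv y) = y)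
    (hφcont : ContinuousOn φ (Icc 0 θb))
    (hφmono : StrictMonoOn φ (Icc 0 θb))
    (hφtop : φ θb = θb) (hφ0 : φ 0 < 0)
    (hfcont : ContinuousOn f (Icc 0 θb))
    (hfpos : ∀ θ ∈ Icc (0:ℝ) θb, 0 < f θ)
    (hslope : θb * A' 1 < 1 - γ) :
    (∃ l ∈ Ioo (0:ℝ) 1, Pis A c cinv φ f γ θb 1 < Pis A c cinv φ f γ θb l) ∧
      ∀ lstar ∈ Ioc (0:ℝ) 1,
        (∀ l ∈ Ioc (0:ℝ) 1, Pis A c cinv φ f γ θb l ≤ Pis A c cinv φ f γ θb lstar) →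
        lstar < 1 := by
  have h0b : (0:ℝ) ≤ θb := hθb.le
  -- `cinv 0 = 0`
  have hcinv0 : cinv 0 = 0 := by have h := hcinv₁ 0 le_rfl; rwa [hc'0] at h
  -- supporting line inequality for the convex cost
  have hsupp : ∀ w ∈ Ici (0:ℝ), ∀ v ∈ Ici (0:ℝ), c w + c' w * (v - w) ≤ c v := by
    intro w hw v hv
    rcases lt_trichotomy v w with h | h | h
    · have hs := hcconv.slope_lt_of_hasDerivWithinAt hv hw h (hcderiv w hw)
      rw [slope_def_field] at hs
      rw [div_lt_iff₀ (by linarith : (0:ℝ) < w - v)] at hs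
      nlinarith
    · simp [h]
    · have hs := hcconv.lt_slope_of_hasDerivWithinAt hw hv h (hcderiv w hw)
      rw [slope_def_field] at hs
      rw [lt_div_iff₀ (by linarith : (0:ℝ) < v - w)] at hs
      nlinarith
  have hcnonneg : ∀ v ∈ Ici (0:ℝ), 0 ≤ c v := by
    intro v hv
    have h := hsupp 0 self_mem_Ici v hv
    rw [hc0, hc'0] at h; linarith
  -- properties of `gaux`
  have hg0 : ∀ r : ℝ, r ≤ 0 → gaux c cinv r = 0 := by
    intro r hr
    simp [gaux, max_eq_right hr, hcinv0, hc0]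
  have hgopt : ∀ r v : ℝ, 0 ≤ v → r * v - c v ≤ gaux c cinv r := by
    intro r v hv
    rcases le_or_gt 0 r with hr | hr
    · have hw := (hcinv₂ (max r 0) (le_max_right r 0)).1
      have hcw := (hcinv₂ (max r 0) (le_max_right r 0)).2
      have hs := hsupp (cinv (max r 0)) hw v hv
      rw [hcw, max_eq_left hr] at hs
      simp only [gaux, max_eq_left hr]
      nlinarith
    · have h1 : gaux c cinv r = 0 := hg0 r hr.le
      have h2 : 0 ≤ c v := hcnonneg v hv
      nlinarith
  have hgmono : ∀ r r' : ℝ, r ≤ r' → gaux c cinv r ≤ gaux c cinv r' := by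
    intro r r' h
    have hw := (hcinv₂ (max r 0) (le_max_right r 0)).1
    have h1 : gaux c cinv r ≤ r' * cinv (max r 0) - c (cinv (max r 0)) := by
      simp only [gaux]
      nlinarith [mul_le_mul_of_nonneg_right h hw]
    exact h1.trans (hgopt r' _ hw)
  have hcinvpos : ∀ r : ℝ, 0 < r → 0 < cinv r := by
    intro r hr
    rcases (hcinv₂ r hr.le).1.lt_or_eq with h | h
    · exact h
    · exfalso
      have h2 := (hcinv₂ r hr.le).2
      rw [← h, hc'0] at h2
      linarith
  have hgpos : ∀ r : ℝ, 0 < r → 0 < gaux c cinv r := by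
    intro r hr
    have hw : 0 < cinv r := hcinvpos r hr
    have hwmem : cinv r ∈ Ici (0:ℝ) := (hcinv₂ r hr.le).1
    have hcw : c' (cinv r) = r := (hcinv₂ r hr.le).2
    have hs := hcconv.slope_lt_of_hasDerivWithinAt self_mem_Ici hwmem hw (hcderiv _ hwmem)
    rw [slope_def_field, hc0, sub_zero, sub_zero, hcw, div_lt_iff₀ hw] at hs
    simp only [gaux, max_eq_left hr.le]
    nlinarith
  have hgstrict : ∀ r r' : ℝ, r < r' → 0 < r' → gaux c cinv r < gaux c cinv r' := by
    intro r r' h hr'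
    rcases le_or_gt r 0 with hr | hr
    · rw [hg0 r hr]; exact hgpos r' hr'
    · have hw : 0 < cinv r := hcinvpos r hr
      have h1 : gaux c cinv r < r' * cinv (max r 0) - c (cinv (max r 0)) := by
        simp only [gaux, max_eq_left hr.le]
        nlinarith
      exact h1.trans_le (hgopt r' _ (hcinv₂ (max r 0) (le_max_right r 0)).1)
  -- choose `l` close to 1
  have hmem1 : (1:ℝ) ∈ Icc (0:ℝ) 1 := right_mem_Icc.2 zero_le_one
  have hA1d := hAderiv 1 hmem1
  have hslopeT : Filter.Tendsto (slope A 1) (nhdsWithin 1 (Ioo (0:ℝ) 1)) (nhds (A' 1)) :=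
    (hasDerivWithinAt_iff_tendsto_slope.1 hA1d).mono_left
      (nhdsWithin_mono _ (fun x hx => ⟨⟨hx.1.le, hx.2.le⟩, by simpa using hx.2.ne⟩))
  have hAT : Filter.Tendsto A (nhdsWithin 1 (Ioo (0:ℝ) 1)) (nhds 1) := by
    have t : Filter.Tendsto A (nhdsWithin 1 (Icc (0:ℝ) 1)) (nhds (A 1)) :=
      hA1d.continuousWithinAt
    rw [hA1] at t
    exact t.mono_left (nhdsWithin_mono _ Ioo_subset_Icc_self)
  have hidT : Filter.Tendsto (fun x : ℝ => x) (nhdsWithin 1 (Ioo (0:ℝ) 1)) (nhds 1) :=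
    Filter.tendsto_id.mono_left nhdsWithin_le_nhds
  have hhT : Filter.Tendsto (fun x => (A x - γ) - x * θb * slope A 1 x)
      (nhdsWithin 1 (Ioo (0:ℝ) 1)) (nhds ((1 - γ) - 1 * θb * A' 1)) :=
    (hAT.sub_const γ).sub ((hidT.mul_const θb).mul hslopeT)
  have hlim : 0 < (1 - γ) - 1 * θb * A' 1 := by
    have h : (1:ℝ) * θb * A' 1 = θb * A' 1 := by ring
    linarith
  haveI : (nhdsWithin (1:ℝ) (Ioo (0:ℝ) 1)).NeBot := right_nhdsWithin_Ioo_neBot zero_lt_one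
  obtain ⟨l, hpos_h, hlmem⟩ :=
    ((hhT.eventually (eventually_gt_nhds hlim)).and self_mem_nhdsWithin).exists
  have hl0 : 0 < l := hlmem.1
  have hl1 : l < 1 := hlmem.2
  have hlne : l ≠ 0 := hl0.ne'
  have hlmemIcc : l ∈ Icc (0:ℝ) 1 := ⟨hl0.le, hl1.le⟩
  have hAl1 : A l < 1 := by
    have h := hAmono hlmemIcc hmem1 hl1; rwa [hA1] at h
  have hAl0 : 0 < A l := by
    have h := hAmono (left_mem_Icc.2 zero_le_one) hlmemIcc hl0; rwa [hA0] at h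
  set c₀ : ℝ := θb * (A l - 1) + (1 - l) / l * (A l - γ) with hc₀def
  have hc₀ : 0 < c₀ := by
    have hsl : slope A 1 l = (A l - 1) / (l - 1) := by rw [slope_def_field, hA1]
    rw [hsl] at hpos_h
    have hne1 : l - 1 ≠ 0 := sub_ne_zero.2 hl1.ne
    have he : c₀ = ((1 - l) / l) * ((A l - γ) - l * θb * ((A l - 1) / (l - 1))) := by
      rw [hc₀def]
      field_simp
      ring
    rw [he]
    exact mul_pos (div_pos (by linarith) hl0) hpos_h
  -- uniform improvement of the effective virtual value
  have hkey : ∀ x : ℝ, x ≤ θb → R A γ x 1 + c₀ ≤ R A γ x l := by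
    intro x hx
    have he : R A γ x l - (R A γ x 1 + c₀) = (θb - x) * (1 - A l) := by
      simp only [R, hc₀def, hA1]
      field_simp
      ring
    nlinarith [mul_nonneg (by linarith : (0:ℝ) ≤ θb - x) (by linarith : (0:ℝ) ≤ 1 - A l)]
  -- integrability
  have hApos : ∀ l' : ℝ, 0 < l' → l' ≤ 1 → 0 < A l' := by
    intro l' h0 h1'
    rcases h1'.lt_or_eq with h | h
    · have h2 := hAmono (left_mem_Icc.2 zero_le_one) ⟨h0.le, h1'⟩ h0; rwa [hA0] at h2
    · rw [h, hA1]; exact one_pos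
  have hGmono : ∀ l' : ℝ, 0 < l' → l' ≤ 1 →
      MonotoneOn (fun θ => gaux c cinv (R A γ (φ θ) l')) (Icc 0 θb) := by
    intro l' h0 h1' θ₁ h₁ θ₂ h₂ h12
    refine hgmono _ _ ?_
    simp only [R]
    have hφle : φ θ₁ ≤ φ θ₂ := by
      rcases h12.lt_or_eq with h | h
      · exact (hφmono h₁ h₂ h).le
      · rw [h]
    have h3 := mul_le_mul_of_nonneg_right
      (show φ θ₁ + (1 - l') / l' ≤ φ θ₂ + (1 - l') / l' by linarith)
      (hApos l' h0 h1').le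
    linarith
  have hInt : ∀ l' : ℝ, 0 < l' → l' ≤ 1 →
      IntervalIntegrable (fun θ => Gg A c cinv φ f γ l' θ) MeasureTheory.volume 0 θb := by
    intro l' h0 h1'
    have hm : MonotoneOn (fun θ => gaux c cinv (R A γ (φ θ) l')) (uIcc 0 θb) := by
      rw [uIcc_of_le h0b]; exact hGmono l' h0 h1'
    exact hm.intervalIntegrable.mul_continuousOn (by rwa [uIcc_of_le h0b])
  have hPis : ∀ l' : ℝ, Pis A c cinv φ f γ θb l' =
      ∫ θ in (0:ℝ)..θb, Gg A c cinv φ f γ l' θ := fun _ => rfl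
  -- locate the region of strict improvement
  have hφθbT : Filter.Tendsto φ (nhdsWithin θb (Ioo (0:ℝ) θb)) (nhds θb) := by
    have t : Filter.Tendsto φ (nhdsWithin θb (Icc (0:ℝ) θb)) (nhds (φ θb)) :=
      hφcont θb (right_mem_Icc.2 h0b)
    rw [hφtop] at t
    exact t.mono_left (nhdsWithin_mono _ Ioo_subset_Icc_self)
  haveI : (nhdsWithin θb (Ioo (0:ℝ) θb)).NeBot := right_nhdsWithin_Ioo_neBot hθb
  obtain ⟨θ₀, hθ₀γ, hθ₀mem⟩ :=
    ((hφθbT.eventually (eventually_gt_nhds hγθ)).and self_mem_nhdsWithin).exists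
  have hθ₀0 : 0 < θ₀ := hθ₀mem.1
  have hθ₀b : θ₀ < θb := hθ₀mem.2
  -- pointwise comparison of integrands
  have hφub : ∀ θ ∈ Icc (0:ℝ) θb, φ θ ≤ θb := by
    intro θ hθ
    rcases hθ.2.lt_or_eq with h | h
    · rw [← hφtop]; exact (hφmono hθ (right_mem_Icc.2 h0b) h).le
    · rw [h, hφtop]
  have hDnn : ∀ θ ∈ Icc (0:ℝ) θb, 0 ≤ Gg A c cinv φ f γ l θ - Gg A c cinv φ f γ 1 θ := by
    intro θ hθ
    have h1 : R A γ (φ θ) 1 ≤ R A γ (φ θ) l := by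
      have h := hkey (φ θ) (hφub θ hθ); linarith
    have h2 := mul_le_mul_of_nonneg_right (hgmono _ _ h1) (hfpos θ hθ).le
    simp only [Gg]
    linarith
  have hDpos : ∀ θ ∈ Ioo θ₀ θb, 0 < Gg A c cinv φ f γ l θ - Gg A c cinv φ f γ 1 θ := by
    intro θ hθ
    have hθIcc : θ ∈ Icc (0:ℝ) θb := ⟨(hθ₀0.trans hθ.1).le, hθ.2.le⟩
    have hφθ : γ < φ θ := hθ₀γ.trans_le (hφmono ⟨hθ₀0.le, hθ₀b.le⟩ hθIcc hθ.1).le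
    have hR1 : R A γ (φ θ) 1 = φ θ - γ := by simp [R, hA1]
    have h1 : R A γ (φ θ) 1 < R A γ (φ θ) l := by
      have h := hkey (φ θ) (hφub θ hθIcc); linarith
    have hR1pos : 0 < R A γ (φ θ) 1 := by rw [hR1]; linarith
    have h3 := mul_lt_mul_of_pos_right (hgstrict _ _ h1 (hR1pos.trans h1)) (hfpos θ hθIcc)
    simp only [Gg]
    linarith
  -- assemble the integrals
  have hI1 := hInt 1 one_pos le_rfl
  have hIl := hInt l hl0 hl1.le
  have hD : IntervalIntegrable (fun θ => Gg A c cinv φ f γ l θ - Gg A c cinv φ f γ 1 θ)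
      MeasureTheory.volume 0 θb := hIl.sub hI1
  have hsub1 : uIcc (0:ℝ) θ₀ ⊆ uIcc (0:ℝ) θb := by
    rw [uIcc_of_le hθ₀0.le, uIcc_of_le h0b]; exact Icc_subset_Icc le_rfl hθ₀b.le
  have hsub2 : uIcc θ₀ θb ⊆ uIcc (0:ℝ) θb := by
    rw [uIcc_of_le hθ₀b.le, uIcc_of_le h0b]; exact Icc_subset_Icc hθ₀0.le le_rfl
  have hint1 := hD.mono_set hsub1
  have hint2 := hD.mono_set hsub2
  have hsplit := intervalIntegral.integral_add_adjacent_intervals hint1 hint2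
  have hp1 : 0 ≤ ∫ θ in (0:ℝ)..θ₀, (Gg A c cinv φ f γ l θ - Gg A c cinv φ f γ 1 θ) :=
    intervalIntegral.integral_nonneg hθ₀0.le (fun u hu => hDnn u ⟨hu.1, hu.2.trans hθ₀b.le⟩)
  have hp2 : 0 < ∫ θ in θ₀..θb, (Gg A c cinv φ f γ l θ - Gg A c cinv φ f γ 1 θ) :=
    intervalIntegral.intervalIntegral_pos_of_pos_on hint2 (fun x hx => hDpos x hx) hθ₀b
  have htot : 0 < ∫ θ in (0:ℝ)..θb, (Gg A c cinv φ f γ l θ - Gg A c cinv φ f γ 1 θ) := by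
    rw [← hsplit]; linarith
  rw [intervalIntegral.integral_sub hIl hI1] at htot
  have hmain : Pis A c cinv φ f γ θb 1 < Pis A c cinv φ f γ θb l := by
    rw [hPis 1, hPis l]; linarith
  refine ⟨⟨l, hlmem, hmain⟩, ?_⟩
  intro lstar hstar hopt
  rcases hstar.2.lt_or_eq with h | h
  · exact h
  · exfalso
    have hle := hopt l ⟨hl0, hl1.le⟩
    rw [h] at hle
    linarith
end

section
/- For any λ with 0 < λ < 1, at least one of the following holds: (i) Π^s(λ) < Π^s(1), or (ii) the set {θ ∈ [0,θ̄] : V^{s,λ}(θ) > 0} strictly contains the set {θ ∈ [0,θ̄] : V^{s,1}(θ) > 0} (content diversity is strictly higher under the imperfect certificate λ than under perfect certification). -/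
open Set

/-!
Write `V(r) = (c')⁻¹(max r 0)` and `G(r) = r V(r) - c(V(r))` (`profitKernel`), so that
`Π^s(λ) = ∫ G(R(φ θ, λ)) f θ`.
By convexity of `c`, `G(r) = max_{v ≥ 0} (r v - c v)`; hence `G` is convex (so continuous),
nonnegative, zero on `r ≤ 0` and strictly increasing on `r > 0`.

Since `R(x, 1) = x - γ` and `R(x, λ) = R(γ, λ) + (x - γ) A(λ)` with `0 < A(λ) < 1`, everything
depends on the sign of `R(γ, λ)`. If it is positive, every type served under `λ = 1` is served
under `λ`, and so is the type with `φ θ = γ`, which is not served under `λ = 1`. Otherwise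
`R(φ θ, λ) < R(φ θ, 1)` wherever the latter is positive, so `G(R(φ θ, λ)) ≤ G(R(φ θ, 1))`
everywhere, strictly where `φ θ > γ` (for instance at `θ̄`).
-/

lemma StrictConvexOn.add_mul_sub_lt_of_hasDerivWithinAt {S : Set ℝ} {f : ℝ → ℝ} {f' x y : ℝ}
    (hf : StrictConvexOn ℝ S f) (hx : x ∈ S) (hy : y ∈ S) (hxy : x ≠ y)
    (hf' : HasDerivWithinAt f f' S x) : f x + f' * (y - x) < f y := by
  rcases hxy.lt_or_gt with hxy | hyx
  · have h := hf.lt_slope_of_hasDerivWithinAt hx hy hxy hf'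
    rw [slope_def_field, lt_div_iff₀ (sub_pos.2 hxy)] at h
    linarith
  · have h := hf.slope_lt_of_hasDerivWithinAt hy hx hyx hf'
    rw [slope_def_field, div_lt_iff₀ (sub_pos.2 hyx)] at h
    linarith

lemma StrictConvexOn.add_mul_sub_le_of_hasDerivWithinAt {S : Set ℝ} {f : ℝ → ℝ} {f' x y : ℝ}
    (hf : StrictConvexOn ℝ S f) (hx : x ∈ S) (hy : y ∈ S)
    (hf' : HasDerivWithinAt f f' S x) : f x + f' * (y - x) ≤ f y := by
  rcases eq_or_ne x y with rfl | hxy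
  · simp
  · exact (hf.add_mul_sub_lt_of_hasDerivWithinAt hx hy hxy hf').le

noncomputable def profitKernel (c cinv : ℝ → ℝ) (r : ℝ) : ℝ :=
  r * cinv (max r 0) - c (cinv (max r 0))

lemma Pis_eq_integral_profitKernel (A c cinv φ f : ℝ → ℝ) (γ θb l : ℝ) :
    Pis A c cinv φ f γ θb l = ∫ θ in (0:ℝ)..θb, profitKernel c cinv (R A γ (φ θ) l) * f θ :=
  rfl

section profitKernel

variable {c c' cinv : ℝ → ℝ}

lemma cinv_pos (hc'0 : c' 0 = 0) (hcinv : ∀ y, 0 ≤ y → 0 ≤ cinv y ∧ c' (cinv y) = y)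
    {y : ℝ} (hy : 0 < y) : 0 < cinv y := by
  obtain ⟨hnonneg, hinv⟩ := hcinv y hy.le
  refine hnonneg.lt_of_ne fun h ↦ ?_
  rw [← h, hc'0] at hinv
  exact hy.ne hinv

lemma profitKernel_of_nonpos (hc0 : c 0 = 0) (hcinv0 : cinv 0 = 0) {r : ℝ} (hr : r ≤ 0) :
    profitKernel c cinv r = 0 := by
  simp [profitKernel, max_eq_right hr, hcinv0, hc0]

lemma mul_sub_le_profitKernel (hcconv : StrictConvexOn ℝ (Ici 0) c)
    (hcderiv : ∀ v ∈ Ici (0:ℝ), HasDerivWithinAt c (c' v) (Ici 0) v) (hcinv0 : cinv 0 = 0)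
    (hcinv : ∀ y, 0 ≤ y → 0 ≤ cinv y ∧ c' (cinv y) = y) (r : ℝ) {v : ℝ} (hv : 0 ≤ v) :
    r * v - c v ≤ profitKernel c cinv r := by
  obtain ⟨hV, hc'V⟩ := hcinv (max r 0) (le_max_right r 0)
  have htangent := hcconv.add_mul_sub_le_of_hasDerivWithinAt hV (mem_Ici.2 hv) (hcderiv _ hV)
  rw [hc'V] at htangent
  have hcorner : (r - max r 0) * (v - cinv (max r 0)) ≤ 0 := by
    rcases le_total r 0 with hr | hr
    · rw [max_eq_right hr, hcinv0]
      nlinarith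
    · simp [max_eq_left hr]
  unfold profitKernel
  nlinarith

lemma profitKernel_nonneg (hc0 : c 0 = 0) (hcconv : StrictConvexOn ℝ (Ici 0) c)
    (hcderiv : ∀ v ∈ Ici (0:ℝ), HasDerivWithinAt c (c' v) (Ici 0) v) (hcinv0 : cinv 0 = 0)
    (hcinv : ∀ y, 0 ≤ y → 0 ≤ cinv y ∧ c' (cinv y) = y) (r : ℝ) :
    0 ≤ profitKernel c cinv r := by
  simpa [hc0] using mul_sub_le_profitKernel hcconv hcderiv hcinv0 hcinv r le_rfl

lemma profitKernel_pos (hc0 : c 0 = 0) (hc'0 : c' 0 = 0) (hcconv : StrictConvexOn ℝ (Ici 0) c)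
    (hcderiv : ∀ v ∈ Ici (0:ℝ), HasDerivWithinAt c (c' v) (Ici 0) v)
    (hcinv : ∀ y, 0 ≤ y → 0 ≤ cinv y ∧ c' (cinv y) = y) {r : ℝ} (hr : 0 < r) :
    0 < profitKernel c cinv r := by
  have hV := cinv_pos hc'0 hcinv hr
  have htangent := hcconv.add_mul_sub_lt_of_hasDerivWithinAt hV.le (mem_Ici.2 le_rfl) hV.ne'
    (hcderiv _ hV.le)
  rw [(hcinv r hr.le).2, hc0] at htangent
  simp only [profitKernel, max_eq_left hr.le]
  linarith

lemma profitKernel_lt_profitKernel (hc0 : c 0 = 0) (hc'0 : c' 0 = 0)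
    (hcconv : StrictConvexOn ℝ (Ici 0) c)
    (hcderiv : ∀ v ∈ Ici (0:ℝ), HasDerivWithinAt c (c' v) (Ici 0) v) (hcinv0 : cinv 0 = 0)
    (hcinv : ∀ y, 0 ≤ y → 0 ≤ cinv y ∧ c' (cinv y) = y) {r s : ℝ} (hrs : r < s) (hs : 0 < s) :
    profitKernel c cinv r < profitKernel c cinv s := by
  obtain ⟨hV, -⟩ := hcinv (max r 0) (le_max_right r 0)
  rcases hV.eq_or_lt with hV | hV
  · have hr : profitKernel c cinv r = 0 := by simp [profitKernel, ← hV, hc0]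
    exact hr ▸ profitKernel_pos hc0 hc'0 hcconv hcderiv hcinv hs
  · calc profitKernel c cinv r
        < s * cinv (max r 0) - c (cinv (max r 0)) := by
          unfold profitKernel; nlinarith
      _ ≤ profitKernel c cinv s := mul_sub_le_profitKernel hcconv hcderiv hcinv0 hcinv s hV.le

/-- As a maximum of affine functions of `r`, `G` is convex. -/
lemma convexOn_profitKernel (hcconv : StrictConvexOn ℝ (Ici 0) c)
    (hcderiv : ∀ v ∈ Ici (0:ℝ), HasDerivWithinAt c (c' v) (Ici 0) v) (hcinv0 : cinv 0 = 0)
    (hcinv : ∀ y, 0 ≤ y → 0 ≤ cinv y ∧ c' (cinv y) = y) :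
    ConvexOn ℝ univ (profitKernel c cinv) := by
  refine ⟨convex_univ, fun r _ s _ a b ha hb hab ↦ ?_⟩
  simp only [smul_eq_mul]
  set V := cinv (max (a • r + b • s) 0)
  have hV : 0 ≤ V := (hcinv _ (le_max_right _ _)).1
  have hr := mul_sub_le_profitKernel hcconv hcderiv hcinv0 hcinv r hV
  have hs := mul_sub_le_profitKernel hcconv hcderiv hcinv0 hcinv s hV
  calc profitKernel c cinv (a * r + b * s)
      = a * (r * V - c V) + b * (s * V - c V) := by
        unfold profitKernel
        linear_combination c V * hab
    _ ≤ a * profitKernel c cinv r + b * profitKernel c cinv s := by gcongr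

lemma continuous_profitKernel (hcconv : StrictConvexOn ℝ (Ici 0) c)
    (hcderiv : ∀ v ∈ Ici (0:ℝ), HasDerivWithinAt c (c' v) (Ici 0) v) (hcinv0 : cinv 0 = 0)
    (hcinv : ∀ y, 0 ≤ y → 0 ≤ cinv y ∧ c' (cinv y) = y) :
    Continuous (profitKernel c cinv) :=
  continuousOn_univ.1 <|
    (convexOn_profitKernel hcconv hcderiv hcinv0 hcinv).continuousOn isOpen_univ

end profitKernel

section certificate

variable {A c c' cinv φ f : ℝ → ℝ} {γ θb l : ℝ}

lemma R_one (hA1 : A 1 = 1) (x : ℝ) : R A γ x 1 = x - γ := by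
  simp [R, hA1]

lemma R_eq_R_add (x : ℝ) : R A γ x l = R A γ γ l + (x - γ) * A l := by
  unfold R; ring

lemma Vs_pos_iff (hc'0 : c' 0 = 0) (hcinv0 : cinv 0 = 0)
    (hcinv : ∀ y, 0 ≤ y → 0 ≤ cinv y ∧ c' (cinv y) = y) (x : ℝ) :
    0 < Vs A cinv γ x l ↔ 0 < R A γ x l := by
  unfold Vs
  constructor
  · intro h
    by_contra! hR
    rw [max_eq_right hR, hcinv0] at h
    exact h.false
  · intro h
    rw [max_eq_left h.le]
    exact cinv_pos hc'0 hcinv h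

lemma setOf_Vs_one_pos_ssubset (hc'0 : c' 0 = 0) (hcinv0 : cinv 0 = 0)
    (hcinv : ∀ y, 0 ≤ y → 0 ≤ cinv y ∧ c' (cinv y) = y) (hA1 : A 1 = 1) (hAl : 0 < A l)
    (hθb : 0 ≤ θb) (hφcont : ContinuousOn φ (Icc 0 θb)) (hφ0 : φ 0 ≤ γ) (hφθb : γ ≤ φ θb)
    (hRγ : 0 < R A γ γ l) :
    {θ ∈ Icc (0:ℝ) θb | 0 < Vs A cinv γ (φ θ) 1} ⊂
      {θ ∈ Icc (0:ℝ) θb | 0 < Vs A cinv γ (φ θ) l} := by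
  simp_rw [Vs_pos_iff hc'0 hcinv0 hcinv, R_one hA1, sub_pos]
  obtain ⟨θγ, hθγ, hφθγ⟩ := intermediate_value_Icc hθb hφcont ⟨hφ0, hφθb⟩
  refine ssubset_of_subset_not_subset (fun θ ⟨hθ, hγφ⟩ ↦ ⟨hθ, ?_⟩) fun hsub ↦ ?_
  · rw [R_eq_R_add]
    positivity
  · exact (hsub ⟨hθγ, by rwa [hφθγ, R_eq_R_add, sub_self, zero_mul, add_zero]⟩).2.ne' hφθγ

lemma profitKernel_R_le_profitKernel_R_one (hc0 : c 0 = 0) (hcconv : StrictConvexOn ℝ (Ici 0) c)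
    (hcderiv : ∀ v ∈ Ici (0:ℝ), HasDerivWithinAt c (c' v) (Ici 0) v) (hcinv0 : cinv 0 = 0)
    (hcinv : ∀ y, 0 ≤ y → 0 ≤ cinv y ∧ c' (cinv y) = y) (hAl : 0 < A l)
    (hRγ : R A γ γ l ≤ 0) {x : ℝ} (hx : x ≤ γ) :
    profitKernel c cinv (R A γ x l) ≤ profitKernel c cinv (R A γ x 1) := by
  have hR : R A γ x l ≤ 0 := by rw [R_eq_R_add]; nlinarith
  rw [profitKernel_of_nonpos hc0 hcinv0 hR]
  exact profitKernel_nonneg hc0 hcconv hcderiv hcinv0 hcinv _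

lemma profitKernel_R_lt_profitKernel_R_one (hc0 : c 0 = 0) (hc'0 : c' 0 = 0)
    (hcconv : StrictConvexOn ℝ (Ici 0) c)
    (hcderiv : ∀ v ∈ Ici (0:ℝ), HasDerivWithinAt c (c' v) (Ici 0) v) (hcinv0 : cinv 0 = 0)
    (hcinv : ∀ y, 0 ≤ y → 0 ≤ cinv y ∧ c' (cinv y) = y) (hA1 : A 1 = 1) (hAl : A l < 1)
    (hRγ : R A γ γ l ≤ 0) {x : ℝ} (hx : γ < x) :
    profitKernel c cinv (R A γ x l) < profitKernel c cinv (R A γ x 1) := by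
  have hR : R A γ x l < R A γ x 1 := by rw [R_eq_R_add, R_one hA1]; nlinarith
  exact profitKernel_lt_profitKernel hc0 hc'0 hcconv hcderiv hcinv0 hcinv hR
    (by rw [R_one hA1]; linarith)

lemma Pis_lt_Pis_one (hc0 : c 0 = 0) (hc'0 : c' 0 = 0) (hcconv : StrictConvexOn ℝ (Ici 0) c)
    (hcderiv : ∀ v ∈ Ici (0:ℝ), HasDerivWithinAt c (c' v) (Ici 0) v) (hcinv0 : cinv 0 = 0)
    (hcinv : ∀ y, 0 ≤ y → 0 ≤ cinv y ∧ c' (cinv y) = y) (hA1 : A 1 = 1) (hAl0 : 0 < A l)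
    (hAl1 : A l < 1) (hθb : 0 < θb) (hφcont : ContinuousOn φ (Icc 0 θb)) (hφθb : γ < φ θb)
    (hfcont : ContinuousOn f (Icc 0 θb)) (hfpos : ∀ θ ∈ Icc (0:ℝ) θb, 0 < f θ)
    (hRγ : R A γ γ l ≤ 0) :
    Pis A c cinv φ f γ θb l < Pis A c cinv φ f γ θb 1 := by
  have hG := continuous_profitKernel hcconv hcderiv hcinv0 hcinv
  have hcont (l' : ℝ) :
      ContinuousOn (fun θ ↦ profitKernel c cinv (R A γ (φ θ) l') * f θ) (Icc 0 θb) :=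
    (hG.comp_continuousOn (by unfold R; fun_prop)).mul hfcont
  have hlt {θ} (hθ : θ ∈ Icc 0 θb) (hγφ : γ < φ θ) :
      profitKernel c cinv (R A γ (φ θ) l) * f θ < profitKernel c cinv (R A γ (φ θ) 1) * f θ :=
    mul_lt_mul_of_pos_right (profitKernel_R_lt_profitKernel_R_one hc0 hc'0 hcconv hcderiv
      hcinv0 hcinv hA1 hAl1 hRγ hγφ) (hfpos θ hθ)
  rw [Pis_eq_integral_profitKernel, Pis_eq_integral_profitKernel]
  have hθb_mem : θb ∈ Icc 0 θb := right_mem_Icc.2 hθb.le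
  refine intervalIntegral.integral_lt_integral_of_continuousOn_of_le_of_exists_lt hθb
    (hcont l) (hcont 1) (fun θ hθ ↦ ?_) ⟨θb, hθb_mem, hlt hθb_mem hφθb⟩
  rcases le_or_gt (φ θ) γ with hφγ | hγφ
  · exact mul_le_mul_of_nonneg_right (profitKernel_R_le_profitKernel_R_one hc0 hcconv hcderiv
      hcinv0 hcinv hAl0 hRγ hφγ) (hfpos θ (Ioc_subset_Icc_self hθ)).le
  · exact (hlt (Ioc_subset_Icc_self hθ) hγφ).le

end certificate

theorem stmt1_general
    (θb γ : ℝ) (A c c' cinv φ f : ℝ → ℝ)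
    (hθb : 0 < θb) (hγ0 : 0 < γ) (hγθ : γ < θb)
    (hA0 : A 0 = 0) (hA1 : A 1 = 1)
    (hAmono : StrictMonoOn A (Icc 0 1))
    (hc0 : c 0 = 0) (hc'0 : c' 0 = 0)
    (hcconv : StrictConvexOn ℝ (Ici 0) c)
    (hcderiv : ∀ v ∈ Ici (0:ℝ), HasDerivWithinAt c (c' v) (Ici 0) v)
    (hcinv₁ : ∀ v, 0 ≤ v → cinv (c' v) = v)
    (hcinv₂ : ∀ y, 0 ≤ y → 0 ≤ cinv y ∧ c' (cinv y) = y)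
    (hφcont : ContinuousOn φ (Icc 0 θb))
    (hφtop : φ θb = θb) (hφ0 : φ 0 < 0)
    (hfcont : ContinuousOn f (Icc 0 θb))
    (hfpos : ∀ θ ∈ Icc (0:ℝ) θb, 0 < f θ) :
    ∀ l ∈ Ioo (0:ℝ) 1,
      Pis A c cinv φ f γ θb l < Pis A c cinv φ f γ θb 1 ∨
      {θ ∈ Icc (0:ℝ) θb | 0 < Vs A cinv γ (φ θ) 1} ⊂
        {θ ∈ Icc (0:ℝ) θb | 0 < Vs A cinv γ (φ θ) l} := by
  rintro l ⟨hl0, hl1⟩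
  have hAl0 : 0 < A l := hA0 ▸ hAmono (left_mem_Icc.2 zero_le_one) ⟨hl0.le, hl1.le⟩ hl0
  have hAl1 : A l < 1 := hA1 ▸ hAmono ⟨hl0.le, hl1.le⟩ (right_mem_Icc.2 zero_le_one) hl1
  have hcinv0 : cinv 0 = 0 := by simpa [hc'0] using hcinv₁ 0 le_rfl
  have hγφ : γ < φ θb := hφtop.symm ▸ hγθ
  rcases le_or_gt (R A γ γ l) 0 with hRγ | hRγ
  · exact .inl <| Pis_lt_Pis_one hc0 hc'0 hcconv hcderiv hcinv0 hcinv₂ hA1 hAl0 hAl1 hθb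
      hφcont hγφ hfcont hfpos hRγ
  · exact .inr <| setOf_Vs_one_pos_ssubset hc'0 hcinv0 hcinv₂ hA1 hAl0 hθb.le hφcont
      (hφ0.trans hγ0).le hγφ.le hRγ

/-- for any `0 < λ < 1`, either `Π^s(λ) < Π^s(1)`, or content diversity
is strictly higher under the imperfect certificate `λ` than under perfect certification. -/
theorem stmt1
    (θb γ : ℝ) (A A' c c' cinv φ f : ℝ → ℝ)
    (hθb : 0 < θb) (hγ0 : 0 < γ) (hγ1 : γ < 1) (hγθ : γ < θb)
    (hA0 : A 0 = 0) (hA1 : A 1 = 1)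
    (hAmono : StrictMonoOn A (Icc 0 1))
    (hAderiv : ∀ y ∈ Icc (0:ℝ) 1, HasDerivWithinAt A (A' y) (Icc 0 1) y)
    (hc0 : c 0 = 0) (hc'0 : c' 0 = 0)
    (hcmono : StrictMonoOn c (Ici 0))
    (hcconv : StrictConvexOn ℝ (Ici 0) c)
    (hcderiv : ∀ v ∈ Ici (0:ℝ), HasDerivWithinAt c (c' v) (Ici 0) v)
    (hc'top : Filter.Tendsto c' Filter.atTop Filter.atTop)
    (hcinv₁ : ∀ v, 0 ≤ v → cinv (c' v) = v)
    (hcinv₂ : ∀ y, 0 ≤ y → 0 ≤ cinv y ∧ c' (cinv y) = y)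
    (hφcont : ContinuousOn φ (Icc 0 θb))
    (hφmono : StrictMonoOn φ (Icc 0 θb))
    (hφtop : φ θb = θb) (hφ0 : φ 0 < 0)
    (hfcont : ContinuousOn f (Icc 0 θb))
    (hfpos : ∀ θ ∈ Icc (0:ℝ) θb, 0 < f θ) :
    ∀ l ∈ Ioo (0:ℝ) 1,
      Pis A c cinv φ f γ θb l < Pis A c cinv φ f γ θb 1 ∨
      {θ ∈ Icc (0:ℝ) θb | 0 < Vs A cinv γ (φ θ) 1} ⊂
        {θ ∈ Icc (0:ℝ) θb | 0 < Vs A cinv γ (φ θ) l} :=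
  stmt1_general θb γ A c c' cinv φ f hθb hγ0 hγθ hA0 hA1 hAmono hc0 hc'0 hcconv hcderiv hcinv₁
    hcinv₂ hφcont hφtop hφ0 hfcont hfpos
end

section
/- For x ≤ x' in ℝ: (i) Λ*(x) ≤ Λ*(x'), i.e., the largest maximizer of λ ↦ R(x, λ) over (0,1] is nondecreasing in x; (ii) max_{λ ∈ (0,1]} R(x, λ) ≤ max_{λ ∈ (0,1]} R(x', λ). Consequently, if φ : [0,θ̄] → ℝ is nondecreasing, then the functions θ ↦ Λ*(φ(θ)), θ ↦ V*(θ) := (c')⁻¹(max{R(φ(θ), Λ*(φ(θ))), 0}), and θ ↦ A(Λ*(φ(θ)))·V*(θ) are all nondecreasing on [0,θ̄]. -/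
open Set

lemma R_diff (A : ℝ → ℝ) (γ x x' l : ℝ) :
    R A γ x' l - R A γ x l = (x' - x) * A l := by
  unfold R; ring

/-- the largest maximizer `Λ*` and the maximized effective virtual value are
nondecreasing in `x`; consequently, for a nondecreasing virtual value `φ`, the optimal
quality `Λ*(φ(θ))`, views `V*(θ)` and allocation `A(Λ*(φ(θ)))·V*(θ)` are nondecreasing. -/
theorem stmt4
    (θb γ : ℝ) (A A' c c' cinv φ : ℝ → ℝ) (Lam : ℝ → ℝ)
    (hθb : 0 < θb) (hγ0 : 0 < γ) (hγ1 : γ < 1)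
    (hA0 : A 0 = 0) (hA1 : A 1 = 1)
    (hAmono : StrictMonoOn A (Icc 0 1))
    (hAderiv : ∀ y ∈ Icc (0:ℝ) 1, HasDerivWithinAt A (A' y) (Icc 0 1) y)
    (hc0 : c 0 = 0) (hc'0 : c' 0 = 0)
    (hcmono : StrictMonoOn c (Ici 0))
    (hcconv : StrictConvexOn ℝ (Ici 0) c)
    (hcderiv : ∀ v ∈ Ici (0:ℝ), HasDerivWithinAt c (c' v) (Ici 0) v)
    (hc'top : Filter.Tendsto c' Filter.atTop Filter.atTop)
    (hcinv₁ : ∀ v, 0 ≤ v → cinv (c' v) = v)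
    (hcinv₂ : ∀ y, 0 ≤ y → 0 ≤ cinv y ∧ c' (cinv y) = y)
    -- `Lam x` is the largest maximizer of `λ ↦ R(x,λ)` over `(0,1]`
    (hLam : ∀ x : ℝ, Lam x ∈ Ioc (0:ℝ) 1 ∧
      (∀ l ∈ Ioc (0:ℝ) 1, R A γ x l ≤ R A γ x (Lam x)) ∧
      (∀ l ∈ Ioc (0:ℝ) 1, R A γ x l = R A γ x (Lam x) → l ≤ Lam x)) :
    (∀ x x' : ℝ, x ≤ x' → Lam x ≤ Lam x') ∧
    (∀ x x' : ℝ, x ≤ x' → R A γ x (Lam x) ≤ R A γ x' (Lam x')) ∧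
    (MonotoneOn φ (Icc 0 θb) →
      MonotoneOn (fun θ => Lam (φ θ)) (Icc 0 θb) ∧
      MonotoneOn (fun θ => cinv (max (R A γ (φ θ) (Lam (φ θ))) 0)) (Icc 0 θb) ∧
      MonotoneOn
        (fun θ => A (Lam (φ θ)) * cinv (max (R A γ (φ θ) (Lam (φ θ))) 0)) (Icc 0 θb)) := by
  -- A is positive on (0,1]
  have hApos : ∀ l ∈ Ioc (0:ℝ) 1, 0 < A l := by
    intro l hl
    have := hAmono (by constructor <;> norm_num) ⟨hl.1.le, hl.2⟩ hl.1
    rwa [hA0] at this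
  have hAmem : ∀ l ∈ Ioc (0:ℝ) 1, l ∈ Icc (0:ℝ) 1 := fun l hl => ⟨hl.1.le, hl.2⟩
  -- Part (i)
  have part1 : ∀ x x' : ℝ, x ≤ x' → Lam x ≤ Lam x' := by
    intro x x' hxx'
    by_contra hlt
    push_neg at hlt
    obtain ⟨hmem, hmax, hlarge⟩ := hLam x
    obtain ⟨hmem', hmax', hlarge'⟩ := hLam x'
    -- Lam x' < Lam x
    have hA_le : A (Lam x') ≤ A (Lam x) :=
      (hAmono (hAmem _ hmem') (hAmem _ hmem) hlt).le
    have h1 : R A γ x (Lam x') ≤ R A γ x (Lam x) := hmax _ hmem'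
    have h2 : R A γ x' (Lam x) ≤ R A γ x' (Lam x') := hmax' _ hmem
    have key : R A γ x' (Lam x) - R A γ x' (Lam x') ≥ 0 := by
      have e1 := R_diff A γ x x' (Lam x)
      have e2 := R_diff A γ x x' (Lam x')
      nlinarith [mul_le_mul_of_nonneg_left hA_le (sub_nonneg.2 hxx')]
    have heq : R A γ x' (Lam x) = R A γ x' (Lam x') := le_antisymm h2 (by linarith)
    have := hlarge' _ hmem heq
    linarith
  -- Part (ii)
  have part2 : ∀ x x' : ℝ, x ≤ x' → R A γ x (Lam x) ≤ R A γ x' (Lam x') := by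
    intro x x' hxx'
    obtain ⟨hmem, hmax, _⟩ := hLam x
    obtain ⟨hmem', hmax', _⟩ := hLam x'
    have h1 : R A γ x (Lam x) ≤ R A γ x' (Lam x) := by
      have := R_diff A γ x x' (Lam x)
      nlinarith [hApos _ hmem, sub_nonneg.2 hxx']
    exact h1.trans (hmax' _ hmem)
  refine ⟨part1, part2, ?_⟩
  intro hφ
  -- c' is monotone on [0,∞)
  have hc'mono : ∀ u v : ℝ, 0 ≤ u → u ≤ v → c' u ≤ c' v := by
    intro u v hu huv
    rcases eq_or_lt_of_le huv with rfl | hlt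
    · exact le_rfl
    · have hvmem : v ∈ Ici (0:ℝ) := le_trans hu huv
      have hcc := hcconv.convexOn
      have h1 : c' u ≤ slope c u v :=
        hcc.le_slope_of_hasDerivWithinAt hu hvmem hlt (hcderiv u hu)
      have h2 : slope c u v ≤ c' v :=
        hcc.slope_le_of_hasDerivWithinAt hu hvmem hlt (hcderiv v hvmem)
      linarith
  -- cinv is monotone on [0,∞)
  have hcinvmono : ∀ y y' : ℝ, 0 ≤ y → y ≤ y' → cinv y ≤ cinv y' := by
    intro y y' hy hyy'
    by_contra h
    push_neg at h
    obtain ⟨hnn', heq'⟩ := hcinv₂ y' (hy.trans hyy')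
    obtain ⟨hnn, heq⟩ := hcinv₂ y hy
    have : c' (cinv y') ≤ c' (cinv y) := hc'mono _ _ hnn' h.le
    rw [heq, heq'] at this
    have : y = y' := le_antisymm hyy' this
    rw [this] at h
    exact lt_irrefl _ h
  have mono1 : MonotoneOn (fun θ => Lam (φ θ)) (Icc 0 θb) := by
    intro a ha b hb hab
    exact part1 _ _ (hφ ha hb hab)
  have monomax : ∀ a ∈ Icc (0:ℝ) θb, ∀ b ∈ Icc (0:ℝ) θb, a ≤ b →
      max (R A γ (φ a) (Lam (φ a))) 0 ≤ max (R A γ (φ b) (Lam (φ b))) 0 :=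
    fun a ha b hb hab => max_le_max (part2 _ _ (hφ ha hb hab)) le_rfl
  have mono2 : MonotoneOn (fun θ => cinv (max (R A γ (φ θ) (Lam (φ θ))) 0)) (Icc 0 θb) := by
    intro a ha b hb hab
    exact hcinvmono _ _ (le_max_right _ _) (monomax a ha b hb hab)
  refine ⟨mono1, mono2, ?_⟩
  intro a ha b hb hab
  have hAa : 0 < A (Lam (φ a)) := hApos _ (hLam (φ a)).1
  have hAab : A (Lam (φ a)) ≤ A (Lam (φ b)) := by
    rcases eq_or_lt_of_le (mono1 ha hb hab) with h | h
    · simp only at h; rw [h]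
    · exact (hAmono (hAmem _ (hLam (φ a)).1) (hAmem _ (hLam (φ b)).1) h).le
  have hcnn : 0 ≤ cinv (max (R A γ (φ a) (Lam (φ a))) 0) :=
    (hcinv₂ _ (le_max_right _ _)).1
  have hcnn' : 0 ≤ cinv (max (R A γ (φ b) (Lam (φ b))) 0) :=
    (hcinv₂ _ (le_max_right _ _)).1
  exact mul_le_mul hAab (mono2 ha hb hab) hcnn (le_of_lt (hAa.trans_le hAab))
end

section
/- Fix x ∈ ℝ. For 0 < γ < γ' < 1, the largest maximizers satisfy Λ*_{γ'}(x) ≥ Λ*_γ(x); that is, the quality of the certificate assigned in the optimal mechanism is nondecreasing in the cost γ of untargeted views. -/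
open Set

/-- for `0 < γ < γ' < 1`, the largest maximizers of `λ ↦ R_γ(x,λ)` over
`(0,1]` satisfy `Λ*_{γ'}(x) ≥ Λ*_γ(x)`: optimal certificate quality is nondecreasing
in the cost `γ` of untargeted views. -/
theorem stmt6
    (x γ γ' : ℝ) (A A' : ℝ → ℝ) (l l' : ℝ)
    (hγ0 : 0 < γ) (hγγ' : γ < γ') (hγ'1 : γ' < 1)
    (hA0 : A 0 = 0) (hA1 : A 1 = 1)
    (hAmono : StrictMonoOn A (Icc 0 1))
    (hAderiv : ∀ y ∈ Icc (0:ℝ) 1, HasDerivWithinAt A (A' y) (Icc 0 1) y)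
    -- `l` is the largest maximizer of `λ ↦ R_γ(x,λ)` over `(0,1]`
    (hl : l ∈ Ioc (0:ℝ) 1)
    (hlmax : ∀ m ∈ Ioc (0:ℝ) 1, R A γ x m ≤ R A γ x l)
    (hllargest : ∀ m ∈ Ioc (0:ℝ) 1, R A γ x m = R A γ x l → m ≤ l)
    -- `l'` is the largest maximizer of `λ ↦ R_{γ'}(x,λ)` over `(0,1]`
    (hl' : l' ∈ Ioc (0:ℝ) 1)
    (hl'max : ∀ m ∈ Ioc (0:ℝ) 1, R A γ' x m ≤ R A γ' x l')
    (hl'largest : ∀ m ∈ Ioc (0:ℝ) 1, R A γ' x m = R A γ' x l' → m ≤ l') :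
    l ≤ l' := by
  by_contra h
  push_neg at h
  have h1 := hl'max l hl
  have h2 := hlmax l' hl'
  have key : ∀ m : ℝ, R A γ' x m = R A γ x m - (γ' - γ) / m := by
    intro m; unfold R; ring
  rw [key l, key l'] at h1
  have hdiv : (γ' - γ) / l < (γ' - γ) / l' :=
    div_lt_div_of_pos_left (by linarith) hl'.1 h
  linarith
end

section
/- For α > 0, let A_α(λ) = A(λ)^α, R_α(x, λ) = (x + (1−λ)/λ)·A_α(λ) − γ/λ, Λ*_α(x) the largest maximizer of λ ↦ R_α(x, λ) over (0,1], and V*_α(x) = (c')⁻¹(max{R_α(x, Λ*_α(x)), 0}). Then for every x ∈ ℝ and every 0 < α' < α such that V*_α(x) > 0, it holds that V*_{α'}(x) > 0 and Λ*_α(x) ≥ Λ*_{α'}(x). -/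
open Set

/-- Effective virtual value with attention `A_α = A^α`:
`R_α(x, λ) = (x + (1−λ)/λ)·A(λ)^α − γ/λ`. -/
noncomputable def Ralpha (A : ℝ → ℝ) (γ α x l : ℝ) : ℝ :=
  (x + (1 - l) / l) * A l ^ α - γ / l

/-- for the parametrized attention `A_α = A^α`, if `0 < α' < α` and the
optimal views `V*_α(x)` are positive, then `V*_{α'}(x) > 0` and `Λ*_α(x) ≥ Λ*_{α'}(x)`. -/
theorem stmt8
    (γ : ℝ) (A A' c c' cinv : ℝ → ℝ) (Lam : ℝ → ℝ → ℝ)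
    (hγ0 : 0 < γ) (hγ1 : γ < 1)
    (hA0 : A 0 = 0) (hA1 : A 1 = 1)
    (hAmono : StrictMonoOn A (Icc 0 1))
    (hAderiv : ∀ y ∈ Icc (0:ℝ) 1, HasDerivWithinAt A (A' y) (Icc 0 1) y)
    (hc0 : c 0 = 0) (hc'0 : c' 0 = 0)
    (hcmono : StrictMonoOn c (Ici 0))
    (hcconv : StrictConvexOn ℝ (Ici 0) c)
    (hcderiv : ∀ v ∈ Ici (0:ℝ), HasDerivWithinAt c (c' v) (Ici 0) v)
    (hc'top : Filter.Tendsto c' Filter.atTop Filter.atTop)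
    (hcinv₁ : ∀ v, 0 ≤ v → cinv (c' v) = v)
    (hcinv₂ : ∀ y, 0 ≤ y → 0 ≤ cinv y ∧ c' (cinv y) = y)
    -- `Lam α x` is the largest maximizer of `λ ↦ R_α(x,λ)` over `(0,1]`
    (hLam : ∀ α : ℝ, 0 < α → ∀ x : ℝ, Lam α x ∈ Ioc (0:ℝ) 1 ∧
      (∀ l ∈ Ioc (0:ℝ) 1, Ralpha A γ α x l ≤ Ralpha A γ α x (Lam α x)) ∧
      (∀ l ∈ Ioc (0:ℝ) 1, Ralpha A γ α x l = Ralpha A γ α x (Lam α x) → l ≤ Lam α x)) :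
    ∀ x α α' : ℝ, 0 < α' → α' < α →
      0 < cinv (max (Ralpha A γ α x (Lam α x)) 0) →
      0 < cinv (max (Ralpha A γ α' x (Lam α' x)) 0) ∧ Lam α' x ≤ Lam α x := by
  intro x α α' hα'0 hα'α hV
  have hα0 : 0 < α := hα'0.trans hα'α
  obtain ⟨hlmem, hlmax, hllarge⟩ := hLam α hα0 x
  obtain ⟨hl'mem, hl'max, _⟩ := hLam α' hα'0 x
  set l : ℝ := Lam α x with hl
  set l' : ℝ := Lam α' x with hl'
  -- c' is (partly) strictly monotone: c' 0 < c' t for t > 0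
  have hc'pos : ∀ t : ℝ, 0 < t → 0 < c' t := by
    intro t ht
    have h1 : c' 0 < slope c 0 t :=
      hcconv.lt_slope_of_hasDerivWithinAt self_mem_Ici (mem_Ici.2 ht.le) ht (hcderiv 0 self_mem_Ici)
    have h2 : slope c 0 t < c' t :=
      hcconv.slope_lt_of_hasDerivWithinAt self_mem_Ici (mem_Ici.2 ht.le) ht (hcderiv t (mem_Ici.2 ht.le))
    rw [hc'0] at h1; linarith
  -- positivity facts about A on (0,1]
  have hApos : ∀ t ∈ Ioc (0:ℝ) 1, 0 < A t := by
    intro t ht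
    have := hAmono (left_mem_Icc.2 zero_le_one) ⟨ht.1.le, ht.2⟩ ht.1
    rwa [hA0] at this
  have hAle1 : ∀ t ∈ Ioc (0:ℝ) 1, A t ≤ 1 := by
    intro t ht
    rcases eq_or_lt_of_le ht.2 with h | h
    · rw [h, hA1]
    · have := hAmono ⟨ht.1.le, ht.2⟩ (right_mem_Icc.2 zero_le_one) h
      rw [hA1] at this; exact this.le
  -- Step 1 : Rα(x, l) > 0
  have hRα : 0 < Ralpha A γ α x l := by
    by_contra h
    push_neg at h
    rw [max_eq_right h] at hV
    obtain ⟨h1, h2⟩ := hcinv₂ 0 le_rfl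
    exact absurd h2 (ne_of_gt (hc'pos _ hV))
  -- notation
  have hlpos : 0 < l := hlmem.1
  have hl'pos : 0 < l' := hl'mem.1
  have hAl : 0 < A l := hApos l hlmem
  have hAl1 : A l ≤ 1 := hAle1 l hlmem
  have hAl' : 0 < A l' := hApos l' hl'mem
  have hAl'1 : A l' ≤ 1 := hAle1 l' hl'mem
  -- the factor B(l) = x + (1-l)/l is positive at l
  have hB : 0 < x + (1 - l) / l := by
    have hγl : 0 < γ / l := div_pos hγ0 hlpos
    have : γ / l < (x + (1 - l) / l) * A l ^ α := by
      have := hRα; unfold Ralpha at this; linarith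
    have hpow : 0 < A l ^ α := Real.rpow_pos_of_pos hAl α
    nlinarith [Real.rpow_le_one hAl.le hAl1 hα0.le, hγl]
  -- A l ^ α' ≥ A l ^ α
  have hexp : A l ^ α ≤ A l ^ α' := Real.rpow_le_rpow_of_exponent_ge hAl hAl1 hα'α.le
  -- Step 2 : R_{α'}(x, l') ≥ R_{α'}(x, l) ≥ R_α(x, l) > 0
  have hRcmp : Ralpha A γ α x l ≤ Ralpha A γ α' x l := by
    unfold Ralpha
    have := mul_le_mul_of_nonneg_left hexp hB.le
    linarith
  have hRα' : 0 < Ralpha A γ α' x l' :=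
    lt_of_lt_of_le (lt_of_lt_of_le hRα hRcmp) (hl'max l hlmem)
  constructor
  · -- V*_{α'} > 0
    rw [max_eq_left hRα'.le]
    obtain ⟨h1, h2⟩ := hcinv₂ _ hRα'.le
    rcases eq_or_lt_of_le h1 with h | h
    · exfalso
      rw [← h, hc'0] at h2
      exact absurd h2.symm (ne_of_gt hRα')
    · exact h
  · -- Lam α' x ≤ Lam α x
    by_contra hcon
    push_neg at hcon
    -- hcon : l < l'
    -- B(l') > 0 as well
    have hB' : 0 < x + (1 - l') / l' := by
      have hγl' : 0 < γ / l' := div_pos hγ0 hl'pos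
      have h1 : γ / l' < (x + (1 - l') / l') * A l' ^ α' := by
        have := hRα'; unfold Ralpha at this; linarith
      have hpow : 0 < A l' ^ α' := Real.rpow_pos_of_pos hAl' α'
      nlinarith [Real.rpow_le_one hAl'.le hAl'1 hα'0.le, hγl']
    -- strict optimality of l for α against l'
    have hstrict : Ralpha A γ α x l' < Ralpha A γ α x l := by
      rcases lt_or_eq_of_le (hlmax l' hl'mem) with h | h
      · exact h
      · exact absurd (hllarge l' hl'mem h) (not_le.2 hcon)
    -- k = A l' ^ (α - α') ∈ (0, 1]
    set k : ℝ := A l' ^ (α - α') with hk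
    have hk0 : 0 < k := Real.rpow_pos_of_pos hAl' _
    have hk1 : k ≤ 1 := Real.rpow_le_one hAl'.le hAl'1 (by linarith)
    -- key splitting identities
    have hsplit' : A l' ^ α = k * A l' ^ α' := by
      rw [hk, ← Real.rpow_add hAl']; ring_nf
    have hsplit : A l ^ α ≤ k * A l ^ α' := by
      have h1 : A l ^ α = A l ^ (α - α') * A l ^ α' := by
        rw [← Real.rpow_add hAl]; ring_nf
      have h2 : A l ^ (α - α') ≤ A l' ^ (α - α') := by
        have hll' : A l ≤ A l' :=
          (hAmono ⟨hlmem.1.le, hlmem.2⟩ ⟨hl'mem.1.le, hl'mem.2⟩ hcon).le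
        exact Real.rpow_le_rpow hAl.le hll' (by linarith)
      rw [h1]
      exact mul_le_mul_of_nonneg_right h2 (Real.rpow_pos_of_pos hAl α').le
    -- multiply the α'-optimality inequality by k and conclude
    have hopt : (x + (1 - l) / l) * A l ^ α' - γ / l ≤
        (x + (1 - l') / l') * A l' ^ α' - γ / l' := hl'max l hlmem
    have hmul : k * ((x + (1 - l) / l) * A l ^ α' - γ / l) ≤
        k * ((x + (1 - l') / l') * A l' ^ α' - γ / l') :=
      mul_le_mul_of_nonneg_left hopt hk0.le
    have hfin : Ralpha A γ α x l ≤ Ralpha A γ α x l' := by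
      unfold Ralpha
      have e1 : (x + (1 - l) / l) * A l ^ α ≤ k * ((x + (1 - l) / l) * A l ^ α') := by
        have := mul_le_mul_of_nonneg_left hsplit hB.le
        linarith [this]
      have e2 : k * ((x + (1 - l') / l') * A l' ^ α') = (x + (1 - l') / l') * A l' ^ α := by
        rw [hsplit']; ring
      -- γ/l' ≤ γ/l since l < l'
      have e3 : γ / l' ≤ γ / l := by
        apply div_le_div_of_nonneg_left hγ0.le hlpos hcon.le
      have e4 : k * (γ / l) - γ / l ≤ k * (γ / l') - γ / l' := by
        have : (1 - k) * (γ / l' - γ / l) ≤ 0 :=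
          mul_nonpos_of_nonneg_of_nonpos (by linarith) (by linarith)
        nlinarith
      have hmul' := hmul
      rw [mul_sub, mul_sub] at hmul'
      linarith [e1, e2, hmul', e4]
    linarith [hstrict, hfin]
end

section
/- Let A(λ; α) be a family of attention functions parametrized by α in an open interval (α_lo, α_hi) ⊂ (0,∞) such that: (i) A(λ; α) is twice continuously differentiable in (λ, α); (ii) for each λ ∈ (0,1), α ↦ A(λ; α) is strictly decreasing; (iii) for each α and all λ < 1, λ ↦ (1/A(λ; α))·∂A(λ; α)/∂α is strictly increasing. Define R_α(x, λ) = (x + (1−λ)/λ)·A(λ; α) − γ/λ, let Λ*_α(x) be the largest maximizer of λ ↦ R_α(x, λ) over (0,1], and V*_α(x) = (c')⁻¹(max{R_α(x, Λ*_α(x)), 0}). Then for every x ∈ ℝ and all α, α' ∈ (α_lo, α_hi) with α' < α and V*_α(x) > 0, it holds that V*_{α'}(x) > 0 and Λ*_α(x) ≥ Λ*_{α'}(x). -/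
open Set

/-- Effective virtual value for a parametrized family of attention functions `A(λ; α)`
(curried as `A l a`): `R_α(x, λ) = (x + (1−λ)/λ)·A(λ; α) − γ/λ`. -/
noncomputable def Rfam (A : ℝ → ℝ → ℝ) (γ a x l : ℝ) : ℝ :=
  (x + (1 - l) / l) * A l a - γ / l

/-- comparative statics for a parametrized family of attention functions.
If `A(λ; α)` is twice continuously differentiable, strictly decreasing in `α`, and
`(1/A)·∂A/∂α` is strictly increasing in `λ` for `λ < 1`, then for `α' < α` with
`V*_α(x) > 0` one has `V*_{α'}(x) > 0` and `Λ*_α(x) ≥ Λ*_{α'}(x)`. -/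
theorem stmt9
    (γ αlo αhi : ℝ) (A Aα : ℝ → ℝ → ℝ) (c c' cinv : ℝ → ℝ) (Lam : ℝ → ℝ → ℝ)
    (hγ0 : 0 < γ) (hγ1 : γ < 1) (hαlo : 0 < αlo) (hαint : αlo < αhi)
    -- each member of the family is an attention function
    (hattn : ∀ a ∈ Ioo αlo αhi,
      A 0 a = 0 ∧ A 1 a = 1 ∧ StrictMonoOn (fun l => A l a) (Icc 0 1) ∧
        DifferentiableOn ℝ (fun l => A l a) (Icc 0 1))
    -- (i) twice continuous differentiability in (λ, α)
    (hC2 : ContDiffOn ℝ 2 (fun p : ℝ × ℝ => A p.1 p.2) (Icc 0 1 ×ˢ Ioo αlo αhi))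
    -- `Aα` is the partial derivative of `A(λ; α)` in `α`
    (hAα : ∀ l ∈ Icc (0:ℝ) 1, ∀ a ∈ Ioo αlo αhi, HasDerivAt (fun b => A l b) (Aα l a) a)
    -- (ii) strictly decreasing in α
    (hdec : ∀ l ∈ Ioo (0:ℝ) 1, StrictAntiOn (fun a => A l a) (Ioo αlo αhi))
    -- (iii) `(1/A)·∂A/∂α` strictly increasing in λ for λ < 1
    (hratio : ∀ a ∈ Ioo αlo αhi, StrictMonoOn (fun l => Aα l a / A l a) (Ioo 0 1))
    (hc0 : c 0 = 0) (hc'0 : c' 0 = 0)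
    (hcmono : StrictMonoOn c (Ici 0))
    (hcconv : StrictConvexOn ℝ (Ici 0) c)
    (hcderiv : ∀ v ∈ Ici (0:ℝ), HasDerivWithinAt c (c' v) (Ici 0) v)
    (hc'top : Filter.Tendsto c' Filter.atTop Filter.atTop)
    (hcinv₁ : ∀ v, 0 ≤ v → cinv (c' v) = v)
    (hcinv₂ : ∀ y, 0 ≤ y → 0 ≤ cinv y ∧ c' (cinv y) = y)
    -- `Lam a x` is the largest maximizer of `λ ↦ R_a(x,λ)` over `(0,1]`
    (hLam : ∀ a ∈ Ioo αlo αhi, ∀ x : ℝ, Lam a x ∈ Ioc (0:ℝ) 1 ∧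
      (∀ l ∈ Ioc (0:ℝ) 1, Rfam A γ a x l ≤ Rfam A γ a x (Lam a x)) ∧
      (∀ l ∈ Ioc (0:ℝ) 1, Rfam A γ a x l = Rfam A γ a x (Lam a x) → l ≤ Lam a x)) :
    ∀ x : ℝ, ∀ a ∈ Ioo αlo αhi, ∀ a' ∈ Ioo αlo αhi, a' < a →
      0 < cinv (max (Rfam A γ a x (Lam a x)) 0) →
      0 < cinv (max (Rfam A γ a' x (Lam a' x)) 0) ∧ Lam a' x ≤ Lam a x := by
  intro x a ha a' ha' haa hV
  have Apos : ∀ b ∈ Ioo αlo αhi, ∀ l ∈ Ioc (0:ℝ) 1, 0 < A l b := by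
    intro b hb l hl
    obtain ⟨h0, h1, hmono, -⟩ := hattn b hb
    have := hmono (left_mem_Icc.mpr zero_le_one) ⟨hl.1.le, hl.2⟩ hl.1
    simpa [h0] using this
  have A1 : ∀ b ∈ Ioo αlo αhi, A 1 b = 1 := fun b hb => (hattn b hb).2.1
  have hAle : ∀ l ∈ Ioc (0:ℝ) 1, A l a ≤ A l a' := by
    intro l hl
    rcases eq_or_lt_of_le hl.2 with h1 | h1
    · rw [h1, A1 a ha, A1 a' ha']
    · exact le_of_lt (hdec l ⟨hl.1, h1⟩ ha' ha haa)
  obtain ⟨hLa, hmaxa, hlarga⟩ := hLam a ha x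
  obtain ⟨hLa', hmaxa', hlarga'⟩ := hLam a' ha' x
  set l := Lam a x with hldef
  set l' := Lam a' x with hl'def
  have hl0 : 0 < l := hLa.1
  have hl1 : l ≤ 1 := hLa.2
  have hl'0 : 0 < l' := hLa'.1
  have hl'1 : l' ≤ 1 := hLa'.2
  have hAla : 0 < A l a := Apos a ha l hLa
  have hAla' : 0 < A l a' := Apos a' ha' l hLa
  have hAl'a : 0 < A l' a := Apos a ha l' hLa'
  have hAl'a' : 0 < A l' a' := Apos a' ha' l' hLa'
  -- from hV : R_a(x, l) > 0
  have hRa : 0 < Rfam A γ a x l := by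
    by_contra h
    push_neg at h
    have hy : max (Rfam A γ a x l) 0 = 0 := max_eq_right h
    have h0 : cinv (max (Rfam A γ a x l) 0) = 0 := by
      rw [hy]
      simpa [hc'0] using hcinv₁ 0 le_rfl
    linarith [hV, h0.le, h0.ge]
  have hγl : 0 < γ / l := div_pos hγ0 hl0
  have hG : 0 < x + (1 - l) / l := by
    have hm : 0 < (x + (1 - l) / l) * A l a := by
      have := hRa; simp only [Rfam] at this; linarith
    by_contra hcg
    push_neg at hcg
    nlinarith
  have hRa'l : 0 < Rfam A γ a' x l := by
    have hle := hAle l hLa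
    have := mul_le_mul_of_nonneg_left hle hG.le
    simp only [Rfam] at hRa ⊢
    nlinarith
  have hRa' : 0 < Rfam A γ a' x l' := lt_of_lt_of_le hRa'l (hmaxa' l hLa)
  constructor
  · have hy : max (Rfam A γ a' x l') 0 = Rfam A γ a' x l' := max_eq_left hRa'.le
    rw [hy]
    obtain ⟨h0, hc'⟩ := hcinv₂ _ hRa'.le
    rcases eq_or_lt_of_le h0 with h | h
    · exfalso
      rw [← h, hc'0] at hc'
      linarith
    · exact h
  · by_contra hcon
    push_neg at hcon
    have hll1 : l < 1 := lt_of_lt_of_le hcon hl'1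
    have h1 : Rfam A γ a x l' < Rfam A γ a x l := by
      rcases lt_or_eq_of_le (hmaxa l' hLa') with h | h
      · exact h
      · exact absurd (hlarga l' hLa' h) (not_le.mpr hcon)
    have h2 : Rfam A γ a' x l ≤ Rfam A γ a' x l' := hmaxa' l hLa
    have hG' : 0 < x + (1 - l') / l' := by
      have hγl' : 0 < γ / l' := div_pos hγ0 hl'0
      have hm : 0 < (x + (1 - l') / l') * A l' a' := by
        have := hRa'; simp only [Rfam] at this; linarith
      by_contra hcg
      push_neg at hcg
      nlinarith
    have hpq : A l a ≤ A l a' := hAle l hLa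
    have hp'q' : A l' a ≤ A l' a' := hAle l' hLa'
    have hK : A l' a' * A l a ≤ A l a' * A l' a := by
      rcases eq_or_lt_of_le hl'1 with h | h
      · rw [h, A1 a ha, A1 a' ha']
        simpa using hpq
      · -- l' < 1 : use the log-ratio monotonicity
        have hsub : Icc a' a ⊆ Ioo αlo αhi := fun b hb =>
          ⟨lt_of_lt_of_le ha'.1 hb.1, lt_of_le_of_lt hb.2 ha.2⟩
        have hder : ∀ b ∈ Ioo αlo αhi,
            HasDerivAt (fun b => Real.log (A l' b) - Real.log (A l b))
              (Aα l' b / A l' b - Aα l b / A l b) b := by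
          intro b hb
          have d1 := (hAα l' ⟨hl'0.le, hl'1⟩ b hb).log (ne_of_gt (Apos b hb l' hLa'))
          have d2 := (hAα l ⟨hl0.le, hl1⟩ b hb).log (ne_of_gt (Apos b hb l hLa))
          exact d1.sub d2
        have hmonoF : StrictMonoOn (fun b => Real.log (A l' b) - Real.log (A l b))
            (Icc a' a) := by
          apply strictMonoOn_of_deriv_pos (convex_Icc a' a)
          · intro b hb
            exact (hder b (hsub hb)).continuousAt.continuousWithinAt
          · intro b hb
            rw [interior_Icc] at hb
            have hb' : b ∈ Ioo αlo αhi := hsub (Ioo_subset_Icc_self hb)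
            rw [(hder b hb').deriv]
            have := hratio b hb' ⟨hl0, hll1⟩ ⟨hl'0, h⟩ hcon
            simp only at this
            linarith
        have hFlt := hmonoF (left_mem_Icc.mpr haa.le) (right_mem_Icc.mpr haa.le) haa
        simp only at hFlt
        have e1 : Real.log (A l' a' * A l a) < Real.log (A l a' * A l' a) := by
          rw [Real.log_mul (ne_of_gt hAl'a') (ne_of_gt hAla),
            Real.log_mul (ne_of_gt hAla') (ne_of_gt hAl'a)]
          linarith
        exact le_of_lt ((Real.log_lt_log_iff (mul_pos hAl'a' hAla) (mul_pos hAla' hAl'a)).mp e1)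
    have hk : γ / l' < γ / l := div_lt_div_of_pos_left hγ0 hl0 hcon
    simp only [Rfam] at h1 h2
    nlinarith [mul_le_mul_of_nonneg_right h2 hAl'a.le,
      mul_lt_mul_of_pos_right h1 hAl'a',
      mul_le_mul_of_nonneg_left hK hG.le,
      mul_le_mul_of_nonneg_left hp'q' (by linarith : (0:ℝ) ≤ γ / l - γ / l')]
end

section
/- Let A(λ) = λ^α with α ∈ (0,1) and c(v) = v^σ/σ with σ > 1, so (c')⁻¹(y) = y^{1/(σ−1)} for y ≥ 0. Fix x ∈ ℝ and for γ ∈ (0,1) let Λ*_γ(x) be the largest maximizer of λ ↦ R_γ(x, λ) = (x + (1−λ)/λ)·λ^α − γ/λ over (0,1], and let the engagement be E_γ(x) = (Λ*_γ(x))^α · (max{R_γ(x, Λ*_γ(x)), 0})^{1/(σ−1)}. Then: (i) Λ*_γ(x) → 0 as γ → 0⁺; and (ii) as γ → 0⁺, E_γ(x) converges to 0 if α ∈ (1/σ, 1), converges to α^{1/(σ−1)} if α = 1/σ, and tends to +∞ if α ∈ (0, 1/σ). -/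
open Set Filter Topology

/-! Comparing the maximal value with the value at `λ = γ` gives `Λ^(α-1) ≥ γ^(α-1) - O(1)`, so
`Λ → 0`. Once `Λ < 1` the maximizer is interior, and the first-order condition
`γ = Λ^α (1 - α - α(x-1)Λ)` turns the maximal value into `Λ^(α-1) (α + (1+α)(x-1)Λ)`. The
engagement is then `Λ^((ασ-1)/(σ-1))` times a factor tending to `α^(1/(σ-1))`, and the sign of
`ασ - 1` decides the limit. -/

/-- Effective virtual value with attention `A(λ) = λ^α`:
`R_γ(x, λ) = (x + (1−λ)/λ)·λ^α − γ/λ`. -/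
noncomputable def Rpow (γ α x l : ℝ) : ℝ := (x + (1 - l) / l) * l ^ α - γ / l

section
variable {γ α x : ℝ}

theorem Rpow_eq {l : ℝ} (hl : l ≠ 0) : Rpow γ α x l = (x - 1) * l ^ α + l ^ (α - 1) - γ / l := by
  rw [Rpow, Real.rpow_sub_one hl]
  field_simp
  ring

theorem hasDerivAt_Rpow {l : ℝ} (hl : l ≠ 0) :
    HasDerivAt (Rpow γ α x)
      ((x - 1) * (α * l ^ (α - 1)) + (α - 1) * l ^ (α - 1 - 1) + γ / l ^ 2) l := by
  have hderiv := (((Real.hasDerivAt_rpow_const (p := α) (.inl hl)).const_mul (x - 1)).add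
    (Real.hasDerivAt_rpow_const (p := α - 1) (.inl hl))).sub ((hasDerivAt_inv hl).const_mul γ)
  refine (hderiv.congr_of_eventuallyEq ?_).congr_deriv (by ring)
  filter_upwards [eventually_ne_nhds hl] with t ht
  simp [Rpow_eq ht, div_eq_mul_inv]

theorem Rpow_eq_of_isLocalMax {L : ℝ} (hL : L ≠ 0) (hmax : IsLocalMax (Rpow γ α x) L) :
    Rpow γ α x L = L ^ (α - 1) * (α + (1 + α) * (x - 1) * L) := by
  have hcrit := hmax.hasDerivAt_eq_zero (hasDerivAt_Rpow hL)
  rw [Rpow_eq hL]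
  simp only [Real.rpow_sub_one hL] at hcrit ⊢
  field_simp at hcrit ⊢
  linear_combination -hcrit

theorem abs_Rpow_sub_le {l : ℝ} (hα : 0 ≤ α) (hl : l ∈ Ioc 0 1) :
    |Rpow γ α x l - (l ^ (α - 1) - γ / l)| ≤ |x - 1| := by
  rw [Rpow_eq hl.1.ne', show ∀ a b c : ℝ, a + b - c - (b - c) = a by intros; ring, abs_mul,
    abs_of_nonneg (Real.rpow_nonneg hl.1.le α)]
  exact mul_le_of_le_one_right (abs_nonneg _) (Real.rpow_le_one hl.1.le hl.2 hα)

theorem rpow_sub_one_le_of_isMaxOn {L : ℝ} (hα : 0 ≤ α) (hγ : γ ∈ Ioc 0 1) (hL : L ∈ Ioc 0 1)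
    (hmax : IsMaxOn (Rpow γ α x) (Ioc 0 1) L) :
    γ ^ (α - 1) - (2 * |x - 1| + 1) ≤ L ^ (α - 1) := by
  have hRγ := (abs_le.mp (abs_Rpow_sub_le (γ := γ) (x := x) hα hγ)).1
  have hRL := (abs_le.mp (abs_Rpow_sub_le (γ := γ) (x := x) hα hL)).2
  rw [div_self hγ.1.ne'] at hRγ
  linarith [isMaxOn_iff.mp hmax γ hγ, div_nonneg hγ.1.le hL.1.le]

end

section Asymptotics

variable {α x : ℝ} {Λ : ℝ → ℝ}

theorem tendsto_const_add_mul_of_tendsto_zero {ι : Type*} {l : Filter ι} {f : ι → ℝ}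
    (hf : Tendsto f l (𝓝 0)) (a c : ℝ) : Tendsto (fun i => a + c * f i) l (𝓝 a) := by
  simpa using tendsto_const_nhds.add (hf.const_mul c)

theorem tendsto_rpow_sub_one_of_isMaxOn (hα0 : 0 ≤ α) (hα1 : α < 1)
    (hΛ : ∀ᶠ γ in 𝓝[>] 0, Λ γ ∈ Ioc 0 1 ∧ IsMaxOn (Rpow γ α x) (Ioc 0 1) (Λ γ)) :
    Tendsto (fun γ => Λ γ ^ (α - 1)) (𝓝[>] 0) atTop := by
  refine tendsto_atTop_mono' _ ?_ (tendsto_atTop_add_const_right _ (-(2 * |x - 1| + 1))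
    (tendsto_rpow_neg_nhdsGT_zero (by linarith : α - 1 < 0)))
  filter_upwards [hΛ, Ioc_mem_nhdsGT one_pos] with γ ⟨hL, hmax⟩ hγ
  exact rpow_sub_one_le_of_isMaxOn hα0 hγ hL hmax

theorem tendsto_nhdsGT_zero_of_isMaxOn (hα0 : 0 ≤ α) (hα1 : α < 1)
    (hΛ : ∀ᶠ γ in 𝓝[>] 0, Λ γ ∈ Ioc 0 1 ∧ IsMaxOn (Rpow γ α x) (Ioc 0 1) (Λ γ)) :
    Tendsto Λ (𝓝[>] 0) (𝓝[>] 0) := by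
  have hpow := (tendsto_rpow_neg_atTop (inv_pos.mpr (sub_pos.mpr hα1))).comp
    (tendsto_rpow_sub_one_of_isMaxOn hα0 hα1 hΛ)
  rw [neg_inv, neg_sub] at hpow
  refine tendsto_nhdsWithin_iff.mpr ⟨hpow.congr' ?_, ?_⟩
  · filter_upwards [hΛ] with γ hγ
    exact Real.rpow_rpow_inv hγ.1.1.le (sub_neg.mpr hα1).ne
  · filter_upwards [hΛ] with γ hγ using hγ.1.1

theorem eventually_engagement_eq (hα : 0 < α) (p : ℝ)
    (hΛ : ∀ᶠ γ in 𝓝[>] 0, Λ γ ∈ Ioc 0 1 ∧ IsMaxOn (Rpow γ α x) (Ioc 0 1) (Λ γ))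
    (hΛ0 : Tendsto Λ (𝓝[>] 0) (𝓝[>] 0)) :
    (fun γ => Λ γ ^ α * max (Rpow γ α x (Λ γ)) 0 ^ p) =ᶠ[𝓝[>] 0]
      fun γ => Λ γ ^ (α + (α - 1) * p) * (α + (1 + α) * (x - 1) * Λ γ) ^ p := by
  have hq := tendsto_const_add_mul_of_tendsto_zero (tendsto_nhds_of_tendsto_nhdsWithin hΛ0)
    α ((1 + α) * (x - 1))
  filter_upwards [hΛ, hΛ0 (Ioo_mem_nhdsGT one_pos), hq.eventually_const_lt hα]
    with γ ⟨hL, hmax⟩ hL1 hq0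
  have hR := Rpow_eq_of_isLocalMax hL.1.ne' (hmax.isLocalMax (Ioc_mem_nhds hL.1 hL1.2))
  have hRpos : 0 ≤ Rpow γ α x (Λ γ) := hR ▸ (mul_pos (Real.rpow_pos_of_pos hL.1 _) hq0).le
  rw [max_eq_left hRpos, hR, Real.mul_rpow (Real.rpow_nonneg hL.1.le _) hq0.le,
    ← Real.rpow_mul hL.1.le, ← mul_assoc, ← Real.rpow_add hL.1]

end Asymptotics

/-- with `A(λ) = λ^α` (`0 < α < 1`) and `c(v) = v^σ/σ` (`σ > 1`), as
`γ → 0⁺` the optimal quality `Λ*_γ(x) → 0`, and the engagement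
`E_γ(x) = Λ*_γ(x)^α · (max{R_γ(x, Λ*_γ(x)), 0})^{1/(σ−1)}` converges to `0` if
`α > 1/σ`, to `α^{1/(σ−1)}` if `α = 1/σ`, and tends to `+∞` if `α < 1/σ`. -/
theorem stmt12
    (α σ x : ℝ) (Lam : ℝ → ℝ)
    (hα0 : 0 < α) (hα1 : α < 1) (hσ : 1 < σ)
    -- `Lam γ` is the largest maximizer of `λ ↦ R_γ(x,λ)` over `(0,1]`
    (hLam : ∀ γ ∈ Ioo (0:ℝ) 1, Lam γ ∈ Ioc (0:ℝ) 1 ∧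
      (∀ l ∈ Ioc (0:ℝ) 1, Rpow γ α x l ≤ Rpow γ α x (Lam γ)) ∧
      (∀ l ∈ Ioc (0:ℝ) 1, Rpow γ α x l = Rpow γ α x (Lam γ) → l ≤ Lam γ)) :
    -- (i) the optimal quality vanishes as γ → 0⁺
    Tendsto Lam (𝓝[>] (0:ℝ)) (𝓝 0) ∧
    -- (ii) the limit of engagement depends on the concavity of attention
    (1 / σ < α →
      Tendsto (fun γ => Lam γ ^ α * max (Rpow γ α x (Lam γ)) 0 ^ (1 / (σ - 1)))
        (𝓝[>] (0:ℝ)) (𝓝 0)) ∧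
    (α = 1 / σ →
      Tendsto (fun γ => Lam γ ^ α * max (Rpow γ α x (Lam γ)) 0 ^ (1 / (σ - 1)))
        (𝓝[>] (0:ℝ)) (𝓝 (α ^ (1 / (σ - 1))))) ∧
    (α < 1 / σ →
      Tendsto (fun γ => Lam γ ^ α * max (Rpow γ α x (Lam γ)) 0 ^ (1 / (σ - 1)))
        (𝓝[>] (0:ℝ)) atTop) := by
  have hΛ : ∀ᶠ γ in 𝓝[>] 0, Lam γ ∈ Ioc 0 1 ∧ IsMaxOn (Rpow γ α x) (Ioc 0 1) (Lam γ) := by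
    filter_upwards [Ioo_mem_nhdsGT one_pos] with γ hγ using ⟨(hLam γ hγ).1, (hLam γ hγ).2.1⟩
  have hΛ0 := tendsto_nhdsGT_zero_of_isMaxOn hα0.le hα1 hΛ
  have hlim := tendsto_nhds_of_tendsto_nhdsWithin hΛ0
  have hE := eventually_engagement_eq hα0 (1 / (σ - 1)) hΛ hΛ0
  have hq := (tendsto_const_add_mul_of_tendsto_zero hlim
    α ((1 + α) * (x - 1))).rpow_const (.inl hα0.ne') (p := 1 / (σ - 1))
  have hσ1 : 0 < σ - 1 := sub_pos.mpr hσ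
  have hβ : α + (α - 1) * (1 / (σ - 1)) = (α * σ - 1) / (σ - 1) := by
    field_simp
    ring
  rw [hβ] at hE
  refine ⟨hlim, fun h => ?_, fun h => ?_, fun h => ?_⟩
  · have hβ0 : 0 < (α * σ - 1) / (σ - 1) :=
      div_pos (sub_pos.mpr ((div_lt_iff₀ (by linarith)).mp h)) hσ1
    have hpow := (Real.continuousAt_rpow_const 0 _ (.inr hβ0.le)).tendsto.comp hlim
    rw [Real.zero_rpow hβ0.ne'] at hpow
    simpa using (hpow.mul hq).congr' hE.symm
  · have hβ0 : (α * σ - 1) / (σ - 1) = 0 := by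
      rw [h, one_div_mul_cancel (by linarith), sub_self, zero_div]
    simp only [hβ0, Real.rpow_zero, one_mul] at hE
    exact hq.congr' hE.symm
  · have hβ0 : (α * σ - 1) / (σ - 1) < 0 :=
      div_neg_of_neg_of_pos (sub_neg.mpr ((lt_div_iff₀ (by linarith)).mp h)) hσ1
    exact (((tendsto_rpow_neg_nhdsGT_zero hβ0).comp hΛ0).atTop_mul_pos
      (Real.rpow_pos_of_pos hα0 _) hq).congr' hE.symm
end

section
/- Let A be an attention function such that λ ↦ A'(λ)/A(λ) is strictly decreasing on (0,1). For b > 0, define A_b(λ) = A(max{λ(1+b) − b, 0}), R_b(x, λ) = (x + (1−λ)/λ)·A_b(λ) − γ/λ, let Λ*_b(x) be the largest maximizer of λ ↦ R_b(x, λ) over (0,1], and V*_b(x) = (c')⁻¹(max{R_b(x, Λ*_b(x)), 0}). Then for every x ∈ ℝ and every 0 < b' < b with V*_b(x) > 0, it holds that V*_{b'}(x) > 0 and Λ*_b(x) ≥ Λ*_{b'}(x); that is, when bad content causes larger consumer losses b, the platform assigns weakly higher-quality certificates. -/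
open Set

/-- Effective virtual value when bad content causes consumer loss `b`:
`R_b(x, λ) = (x + (1−λ)/λ)·A(max{λ(1+b) − b, 0}) − γ/λ`. -/
noncomputable def Rloss (A : ℝ → ℝ) (γ b x l : ℝ) : ℝ :=
  (x + (1 - l) / l) * A (max ((1 + b) * l - b) 0) - γ / l

/-- Key log-concavity cross inequality. -/
lemma key_cross (A A' : ℝ → ℝ)
    (hA0 : A 0 = 0)
    (hAmono : StrictMonoOn A (Icc 0 1))
    (hAderiv : ∀ y ∈ Icc (0:ℝ) 1, HasDerivWithinAt A (A' y) (Icc 0 1) y)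
    (hratio : StrictAntiOn (fun l => A' l / A l) (Ioo 0 1))
    {s1 t1 s2 t2 : ℝ} (hs1 : 0 < s1) (h11 : s1 < t1) (h12 : s1 < s2)
    (ht12 : t1 < t2) (h22 : s2 < t2) (ht2 : t2 < 1)
    (hlen : t2 - s2 ≤ t1 - s1) :
    A s1 * A t2 ≤ A s2 * A t1 := by
  have hsub : Icc s1 t2 ⊆ Icc 0 1 :=
    Icc_subset_Icc hs1.le ht2.le
  have hApos : ∀ y ∈ Icc s1 t2, 0 < A y := by
    intro y hy
    have h0y : (0:ℝ) < y := lt_of_lt_of_le hs1 hy.1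
    have := hAmono (left_mem_Icc.2 zero_le_one) (hsub hy) h0y
    rwa [hA0] at this
  set f : ℝ → ℝ := fun y => Real.log (A y) with hf
  have hAc : ContinuousOn A (Icc 0 1) := fun y hy => (hAderiv y hy).continuousWithinAt
  have hfc : ContinuousOn f (Icc s1 t2) :=
    (hAc.mono hsub).log (fun y hy => (hApos y hy).ne')
  have hderiv : ∀ y ∈ Ioo s1 t2, deriv f y = A' y / A y := by
    intro y hy
    have hy01 : y ∈ Ioo (0:ℝ) 1 := ⟨hs1.trans hy.1, hy.2.trans ht2⟩
    have hmem : y ∈ Icc (0:ℝ) 1 := ⟨hy01.1.le, hy01.2.le⟩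
    have hA : HasDerivAt A (A' y) y :=
      (hAderiv y hmem).hasDerivAt (Icc_mem_nhds hy01.1 hy01.2)
    have hAy : A y ≠ 0 := (hApos y ⟨hy.1.le, hy.2.le⟩).ne'
    exact (hA.log hAy).deriv
  have hconc : ConcaveOn ℝ (Icc s1 t2) f := by
    refine (StrictAntiOn.strictConcaveOn_of_deriv (convex_Icc _ _) hfc ?_).concaveOn
    rw [interior_Icc]
    intro a ha b hb hab
    rw [hderiv a ha, hderiv b hb]
    exact hratio ⟨hs1.trans ha.1, ha.2.trans ht2⟩ ⟨hs1.trans hb.1, hb.2.trans ht2⟩ hab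
  -- slope inequalities
  have hs1m : s1 ∈ Icc s1 t2 := left_mem_Icc.2 (le_of_lt ((h11.trans ht12)))
  have ht2m : t2 ∈ Icc s1 t2 := right_mem_Icc.2 (le_of_lt ((h11.trans ht12)))
  have ht1m : t1 ∈ Icc s1 t2 := ⟨h11.le, ht12.le⟩
  have hs2m : s2 ∈ Icc s1 t2 := ⟨h12.le, h22.le⟩
  have h1 : slope f s1 t2 ≤ slope f s1 t1 := by
    have := (hconc.slope_anti hs1m)
      (a := t1) (b := t2) ⟨ht1m, h11.ne'⟩ ⟨ht2m, (h11.trans ht12).ne'⟩ ht12.le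
    exact this
  have h2 : slope f t2 s2 ≤ slope f t2 s1 := by
    exact (hconc.slope_anti ht2m)
      (a := s1) (b := s2) ⟨hs1m, (h11.trans ht12).ne⟩ ⟨hs2m, h22.ne⟩ h12.le
  have hcomm1 : slope f t2 s1 = slope f s1 t2 := slope_comm f t2 s1
  have hcomm2 : slope f t2 s2 = slope f s2 t2 := slope_comm f t2 s2
  have hslope22 : slope f s2 t2 ≤ slope f s1 t1 := by
    rw [← hcomm2]; rw [← hcomm1] at h1; linarith
  have hslope11_nonneg : 0 ≤ slope f s1 t1 := by
    rw [slope_def_field]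
    apply div_nonneg _ (by linarith)
    have : A s1 ≤ A t1 := (hAmono (hsub hs1m) (hsub ht1m) h11).le
    have := Real.log_le_log (hApos s1 hs1m) this
    linarith
  have hft2 : f t2 - f s2 = slope f s2 t2 * (t2 - s2) := by
    rw [slope_def_field, div_mul_cancel₀]
    linarith
  have hft1 : f t1 - f s1 = slope f s1 t1 * (t1 - s1) := by
    rw [slope_def_field, div_mul_cancel₀]
    linarith
  have hkey : f t2 - f s2 ≤ f t1 - f s1 := by
    rw [hft1, hft2]
    nlinarith [hslope22, hslope11_nonneg, hlen, sub_nonneg.2 h22.le]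
  -- exponentiate
  have hlog : Real.log (A s1 * A t2) ≤ Real.log (A s2 * A t1) := by
    rw [Real.log_mul (hApos s1 hs1m).ne' (hApos t2 ht2m).ne',
      Real.log_mul (hApos s2 hs2m).ne' (hApos t1 ht1m).ne']
    simp only [hf] at hkey
    linarith
  have := Real.exp_le_exp.2 hlog
  rwa [Real.exp_log (mul_pos (hApos s1 hs1m) (hApos t2 ht2m)),
    Real.exp_log (mul_pos (hApos s2 hs2m) (hApos t1 ht1m))] at this

/-- if `A'/A` is strictly decreasing on `(0,1)`, then for losses
`0 < b' < b` from bad content with `V*_b(x) > 0`, one has `V*_{b'}(x) > 0` and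
`Λ*_b(x) ≥ Λ*_{b'}(x)`: higher losses lead to weakly higher-quality certificates. -/
theorem stmt13
    (γ : ℝ) (A A' c c' cinv : ℝ → ℝ) (Lam : ℝ → ℝ → ℝ)
    (hγ0 : 0 < γ) (hγ1 : γ < 1)
    (hA0 : A 0 = 0) (hA1 : A 1 = 1)
    (hAmono : StrictMonoOn A (Icc 0 1))
    (hAderiv : ∀ y ∈ Icc (0:ℝ) 1, HasDerivWithinAt A (A' y) (Icc 0 1) y)
    (hratio : StrictAntiOn (fun l => A' l / A l) (Ioo 0 1))
    (hc0 : c 0 = 0) (hc'0 : c' 0 = 0)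
    (hcmono : StrictMonoOn c (Ici 0))
    (hcconv : StrictConvexOn ℝ (Ici 0) c)
    (hcderiv : ∀ v ∈ Ici (0:ℝ), HasDerivWithinAt c (c' v) (Ici 0) v)
    (hc'top : Filter.Tendsto c' Filter.atTop Filter.atTop)
    (hcinv₁ : ∀ v, 0 ≤ v → cinv (c' v) = v)
    (hcinv₂ : ∀ y, 0 ≤ y → 0 ≤ cinv y ∧ c' (cinv y) = y)
    -- `Lam b x` is the largest maximizer of `λ ↦ R_b(x,λ)` over `(0,1]`
    (hLam : ∀ b : ℝ, 0 < b → ∀ x : ℝ, Lam b x ∈ Ioc (0:ℝ) 1 ∧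
      (∀ l ∈ Ioc (0:ℝ) 1, Rloss A γ b x l ≤ Rloss A γ b x (Lam b x)) ∧
      (∀ l ∈ Ioc (0:ℝ) 1, Rloss A γ b x l = Rloss A γ b x (Lam b x) → l ≤ Lam b x)) :
    ∀ x b b' : ℝ, 0 < b' → b' < b →
      0 < cinv (max (Rloss A γ b x (Lam b x)) 0) →
      0 < cinv (max (Rloss A γ b' x (Lam b' x)) 0) ∧ Lam b' x ≤ Lam b x := by
  intro x b b' hb' hb'b hV
  have hb : 0 < b := hb'.trans hb'b
  have hcinv0 : cinv 0 = 0 := by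
    have := hcinv₁ 0 le_rfl
    rwa [hc'0] at this
  obtain ⟨hl1mem, hmax1, hlarge1⟩ := hLam b hb x
  obtain ⟨hl2mem, hmax2, hlarge2⟩ := hLam b' hb' x
  set l1 := Lam b x with hl1def
  set l2 := Lam b' x with hl2def
  have hl1pos : 0 < l1 := hl1mem.1
  have hl11 : l1 ≤ 1 := hl1mem.2
  have hl2pos : 0 < l2 := hl2mem.1
  have hl21 : l2 ≤ 1 := hl2mem.2
  -- step 1: R_b(l1) > 0
  have hR1pos : 0 < Rloss A γ b x l1 := by
    by_contra h
    push_neg at h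
    rw [max_eq_right h, hcinv0] at hV
    exact lt_irrefl 0 hV
  -- positivity of cinv on positives
  have hcinvpos : ∀ y : ℝ, 0 < y → 0 < cinv y := by
    intro y hy
    obtain ⟨h0, hcy⟩ := hcinv₂ y hy.le
    rcases h0.lt_or_eq with h | h
    · exact h
    · exfalso; rw [← h, hc'0] at hcy; linarith
  -- basic facts about the A-arguments at l1
  have hs1le : (1 + b) * l1 - b ≤ l1 := by
    have h := mul_nonneg hb.le (by linarith : (0:ℝ) ≤ 1 - l1)
    nlinarith
  have ht1le : (1 + b') * l1 - b' ≤ l1 := by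
    have h := mul_nonneg hb'.le (by linarith : (0:ℝ) ≤ 1 - l1)
    nlinarith
  have hs1t1 : (1 + b) * l1 - b ≤ (1 + b') * l1 - b' := by
    have h := mul_nonneg (by linarith : (0:ℝ) ≤ b - b') (by linarith : (0:ℝ) ≤ 1 - l1)
    nlinarith
  have hmemA : ∀ u : ℝ, u ≤ 1 → max u 0 ∈ Icc (0:ℝ) 1 :=
    fun u hu => ⟨le_max_right _ _, max_le hu zero_le_one⟩
  have hAmonoOn := hAmono.monotoneOn
  have hAnonneg : ∀ u ∈ Icc (0:ℝ) 1, 0 ≤ A u := by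
    intro u hu
    have := hAmonoOn (left_mem_Icc.2 zero_le_one) hu hu.1
    rwa [hA0] at this
  -- coefficient positivity at l1 and A_b(l1) > 0
  have hγl1 : 0 < γ / l1 := div_pos hγ0 hl1pos
  have hprod1 : 0 < (x + (1 - l1) / l1) * A (max ((1 + b) * l1 - b) 0) := by
    have h := hR1pos
    unfold Rloss at h
    linarith
  have hAs1mem := hmemA _ (hs1le.trans hl11)
  have hAt1mem := hmemA _ (ht1le.trans hl11)
  have hAs1nonneg := hAnonneg _ hAs1mem
  have hAs1pos : 0 < A (max ((1 + b) * l1 - b) 0) := by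
    rcases hAs1nonneg.lt_or_eq with h | h
    · exact h
    · exfalso; rw [← h] at hprod1; simp at hprod1
  have hφ1pos : 0 < x + (1 - l1) / l1 := by
    by_contra h
    push_neg at h
    nlinarith [hprod1, hAs1pos]
  -- step 1 conclusion: R_{b'}(l1) ≥ R_b(l1) > 0 and so R_{b'}(l2) > 0
  have hAle1 : A (max ((1 + b) * l1 - b) 0) ≤ A (max ((1 + b') * l1 - b') 0) :=
    hAmonoOn hAs1mem hAt1mem (max_le_max hs1t1 le_rfl)
  have hR1'pos : 0 < Rloss A γ b' x l1 := by
    have h1 : Rloss A γ b x l1 ≤ Rloss A γ b' x l1 := by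
      unfold Rloss
      have := mul_le_mul_of_nonneg_left hAle1 hφ1pos.le
      linarith
    linarith
  have hR2'pos : 0 < Rloss A γ b' x l2 :=
    lt_of_lt_of_le hR1'pos (hmax2 l1 hl1mem)
  have hV' : 0 < cinv (max (Rloss A γ b' x l2) 0) := by
    rw [max_eq_left hR2'pos.le]
    exact hcinvpos _ hR2'pos
  refine ⟨hV', ?_⟩
  -- step 2: suppose l1 < l2, derive a contradiction
  by_contra hcon
  push_neg at hcon
  have hl12 : l1 < l2 := hcon
  have hl1lt1 : l1 < 1 := lt_of_lt_of_le hl12 hl21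
  -- strict inequality from largest maximizer
  have hRstrict : Rloss A γ b x l2 < Rloss A γ b x l1 := by
    rcases (hmax1 l2 hl2mem).lt_or_eq with h | h
    · exact h
    · exact absurd (hlarge1 l2 hl2mem h) (not_le.2 hl12)
  -- set up the four A-arguments
  set s1 := (1 + b) * l1 - b with hs1def
  set t1 := (1 + b') * l1 - b' with ht1def
  set s2 := (1 + b) * l2 - b with hs2def
  set t2 := (1 + b') * l2 - b' with ht2def
  have hs1pos : 0 < s1 := by
    by_contra h
    push_neg at h
    rw [max_eq_right h, hA0] at hAs1pos
    exact lt_irrefl 0 hAs1pos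
  have hs1t1' : s1 < t1 := by
    have h := mul_pos (by linarith : (0:ℝ) < b - b') (by linarith : (0:ℝ) < 1 - l1)
    have he : t1 - s1 = (b - b') * (1 - l1) := by rw [ht1def, hs1def]; ring
    linarith
  have hs12 : s1 < s2 := by
    have h := mul_pos (by linarith : (0:ℝ) < 1 + b) (by linarith : (0:ℝ) < l2 - l1)
    have he : s2 - s1 = (1 + b) * (l2 - l1) := by rw [hs2def, hs1def]; ring
    linarith
  have ht12 : t1 < t2 := by
    have h := mul_pos (by linarith : (0:ℝ) < 1 + b') (by linarith : (0:ℝ) < l2 - l1)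
    have he : t2 - t1 = (1 + b') * (l2 - l1) := by rw [ht2def, ht1def]; ring
    linarith
  have hs2t2 : s2 ≤ t2 := by
    have h := mul_nonneg (by linarith : (0:ℝ) ≤ b - b') (by linarith : (0:ℝ) ≤ 1 - l2)
    have he : t2 - s2 = (b - b') * (1 - l2) := by rw [ht2def, hs2def]; ring
    linarith
  have ht2le : t2 ≤ l2 := by
    have h := mul_nonneg hb'.le (by linarith : (0:ℝ) ≤ 1 - l2)
    have he : l2 - t2 = b' * (1 - l2) := by rw [ht2def]; ring
    linarith
  have ht1le1 : t1 ≤ 1 := le_of_lt (ht12.trans_le (ht2le.trans hl21))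
  have hs2le1 : s2 ≤ 1 := by
    have h := mul_nonneg hb.le (by linarith : (0:ℝ) ≤ 1 - l2)
    have he : l2 - s2 = b * (1 - l2) := by rw [hs2def]; ring
    linarith
  have hlen : t2 - s2 ≤ t1 - s1 := by
    have h := mul_nonneg (by linarith : (0:ℝ) ≤ b - b') (by linarith : (0:ℝ) ≤ l2 - l1)
    have he : (t1 - s1) - (t2 - s2) = (b - b') * (l2 - l1) := by
      rw [ht1def, hs1def, ht2def, hs2def]; ring
    linarith
  -- rewrite maxes
  have hms1 : max s1 0 = s1 := max_eq_left hs1pos.le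
  have hmt1 : max t1 0 = t1 := max_eq_left (hs1pos.trans hs1t1').le
  have hms2 : max s2 0 = s2 := max_eq_left (hs1pos.trans hs12).le
  have hmt2 : max t2 0 = t2 := max_eq_left (hs1pos.trans (hs1t1'.trans ht12)).le
  -- key cross inequality
  have hK : A s1 * A t2 ≤ A s2 * A t1 := by
    rcases hs2t2.lt_or_eq with h22 | h22
    · have ht2lt1 : t2 < 1 := by
        have hl2lt1 : l2 < 1 := by
          by_contra h
          push_neg at h
          have : l2 = 1 := le_antisymm hl21 h
          rw [ht2def, hs2def, this] at h22
          linarith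
        have h := mul_pos (by linarith : (0:ℝ) < 1 + b') (by linarith : (0:ℝ) < 1 - l2)
        have he : 1 - t2 = (1 + b') * (1 - l2) := by rw [ht2def]; ring
        linarith
      exact key_cross A A' hA0 hAmono hAderiv hratio hs1pos hs1t1' hs12 ht12 h22 ht2lt1 hlen
    · -- s2 = t2, reduce to A s1 ≤ A t1
      rw [← h22]
      have h : A s1 ≤ A t1 :=
        hAmonoOn ⟨hs1pos.le, hs1le.trans hl11⟩ ⟨(hs1pos.trans hs1t1').le, ht1le1⟩ hs1t1'.le
      have hApos2 : 0 ≤ A s2 := hAnonneg _ ⟨(hs1pos.trans hs12).le, hs2le1⟩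
      calc A s1 * A s2 = A s2 * A s1 := mul_comm _ _
        _ ≤ A s2 * A t1 := mul_le_mul_of_nonneg_left h hApos2
  -- abbreviations
  set a1 := A s1 with ha1
  set a1' := A t1 with ha1'
  set a2 := A s2 with ha2
  set a2' := A t2 with ha2'
  have ha1pos : 0 < a1 := by rw [hms1] at hAs1pos; exact hAs1pos
  have ha1'pos : 0 < a1' := by
    have := hAmono (left_mem_Icc.2 zero_le_one) ⟨(hs1pos.trans hs1t1').le, ht1le1⟩
      (hs1pos.trans hs1t1')
    rwa [hA0] at this
  have ha2pos : 0 < a2 := by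
    have := hAmono (left_mem_Icc.2 zero_le_one) ⟨(hs1pos.trans hs12).le, hs2le1⟩
      (hs1pos.trans hs12)
    rwa [hA0] at this
  have ha2'pos : 0 < a2' := by
    have := hAmono (left_mem_Icc.2 zero_le_one)
      ⟨(hs1pos.trans (hs1t1'.trans ht12)).le, ht2le.trans hl21⟩
      (hs1pos.trans (hs1t1'.trans ht12))
    rwa [hA0] at this
  have ha11' : a1 ≤ a1' :=
    hAmonoOn ⟨hs1pos.le, hs1le.trans hl11⟩ ⟨(hs1pos.trans hs1t1').le, ht1le1⟩ hs1t1'.le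
  have ha22' : a2 ≤ a2' :=
    hAmonoOn ⟨(hs1pos.trans hs12).le, hs2le1⟩
      ⟨(hs1pos.trans (hs1t1'.trans ht12)).le, ht2le.trans hl21⟩ hs2t2
  -- express the Rloss values
  set P := x + (1 - l1) / l1 with hP
  set Q := x + (1 - l2) / l2 with hQ
  have hRb1 : Rloss A γ b x l1 = P * a1 - γ / l1 := by
    unfold Rloss; rw [hms1]
  have hRb'1 : Rloss A γ b' x l1 = P * a1' - γ / l1 := by
    unfold Rloss; rw [hmt1]
  have hRb2 : Rloss A γ b x l2 = Q * a2 - γ / l2 := by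
    unfold Rloss; rw [hms2]
  have hRb'2 : Rloss A γ b' x l2 = Q * a2' - γ / l2 := by
    unfold Rloss; rw [hmt2]
  -- ratio argument
  set ρ1 := a1 / a1' with hρ1
  set ρ2 := a2 / a2' with hρ2
  have hρ1pos : 0 < ρ1 := div_pos ha1pos ha1'pos
  have hρ1le1 : ρ1 ≤ 1 := (div_le_one ha1'pos).2 ha11'
  have hρ2le1 : ρ2 ≤ 1 := (div_le_one ha2'pos).2 ha22'
  have hρle : ρ1 ≤ ρ2 := by
    rw [hρ1, hρ2, div_le_div_iff₀ ha1'pos ha2'pos]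
    linarith [hK]
  have hU12 : Rloss A γ b' x l1 ≤ Rloss A γ b' x l2 := hmax2 l1 hl1mem
  have hid1 : P * a1 - γ / l1 = ρ1 * (P * a1' - γ / l1) - (1 - ρ1) * (γ / l1) := by
    rw [hρ1]
    field_simp
    ring
  have hid2 : Q * a2 - γ / l2 = ρ2 * (Q * a2' - γ / l2) - (1 - ρ2) * (γ / l2) := by
    rw [hρ2]
    field_simp
    ring
  have hγl2 : 0 < γ / l2 := div_pos hγ0 hl2pos
  have hγl12 : γ / l2 ≤ γ / l1 := by gcongr
  have hU1pos : 0 < P * a1' - γ / l1 := by rw [← hRb'1]; exact hR1'pos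
  have hU12' : P * a1' - γ / l1 ≤ Q * a2' - γ / l2 := by
    rw [← hRb'1, ← hRb'2]; exact hU12
  have hρU : ρ1 * (P * a1' - γ / l1) ≤ ρ2 * (Q * a2' - γ / l2) := by
    have h1 : ρ1 * (P * a1' - γ / l1) ≤ ρ1 * (Q * a2' - γ / l2) :=
      mul_le_mul_of_nonneg_left hU12' hρ1pos.le
    have h2 : ρ1 * (Q * a2' - γ / l2) ≤ ρ2 * (Q * a2' - γ / l2) :=
      mul_le_mul_of_nonneg_right hρle (le_of_lt (hU1pos.trans_le hU12'))
    linarith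
  have hγterm : (1 - ρ2) * (γ / l2) ≤ (1 - ρ1) * (γ / l1) :=
    mul_le_mul (by linarith) hγl12 hγl2.le (by linarith)
  have hfin : Rloss A γ b x l1 ≤ Rloss A γ b x l2 := by
    rw [hRb1, hRb2, hid1, hid2]
    linarith
  linarith
end

section
/- Let A be an attention function such that λ ↦ A'(λ)/A(λ) is strictly decreasing on (0,1). For z with 0 < z and A(z) < γ, define A_z(λ) = A(min{λ + z, 1}), R_z(x, λ) = (x + (1−λ)/λ)·A_z(λ) − γ/λ, let Λ*_z(x) be the largest maximizer of λ ↦ R_z(x, λ) over (0,1], and V*_z(x) = (c')⁻¹(max{R_z(x, Λ*_z(x)), 0}). Then for every x ∈ ℝ and all z, z' with 0 < z < z' < A⁻¹(γ) such that V*_z(x) > 0, it holds that V*_{z'}(x) > 0 and Λ*_z(x) ≥ Λ*_{z'}(x); that is, when consumers are more addicted, certificate quality is weakly lower. -/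
open Set

/-- Log-concavity cross inequality from `A'/A` strictly decreasing. -/
lemma logconc_aux (A A' : ℝ → ℝ)
    (hA0 : A 0 = 0)
    (hAmono : StrictMonoOn A (Icc 0 1))
    (hAderiv : ∀ y ∈ Icc (0:ℝ) 1, HasDerivWithinAt A (A' y) (Icc 0 1) y)
    (hratio : StrictAntiOn (fun l => A' l / A l) (Ioo 0 1)) :
    ∀ a b h : ℝ, 0 < a → a ≤ b → 0 ≤ h → b + h ≤ 1 →
      A (b + h) * A a ≤ A (a + h) * A b := by
  have Apos : ∀ t : ℝ, 0 < t → t ≤ 1 → 0 < A t := by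
    intro t ht ht1
    have := hAmono (left_mem_Icc.2 zero_le_one) ⟨ht.le, ht1⟩ ht
    rwa [hA0] at this
  intro a b h ha hab hh hbh1
  rcases eq_or_lt_of_le hh with hh0 | hh0
  · simp [← hh0, mul_comm]
  rcases eq_or_lt_of_le hab with hab0 | hab0
  · simp [hab0, mul_comm]
  have ha1 : a < 1 := by linarith
  set φ : ℝ → ℝ := fun t => Real.log (A t) with hφ
  have hconc : ConcaveOn ℝ (Icc a 1) φ := by
    have hint : interior (Icc a (1:ℝ)) = Ioo a 1 := interior_Icc
    have hderiv : ∀ t ∈ Ioo a (1:ℝ), HasDerivAt φ (A' t / A t) t := by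
      intro t ht
      have ht' : t ∈ Icc (0:ℝ) 1 := ⟨(ha.trans ht.1).le, ht.2.le⟩
      have hdA : HasDerivAt A (A' t) t :=
        (hAderiv t ht').hasDerivAt (Icc_mem_nhds (ha.trans ht.1) ht.2)
      have hAt : A t ≠ 0 := (Apos t (ha.trans ht.1) ht.2.le).ne'
      simpa using hdA.log hAt
    refine AntitoneOn.concaveOn_of_deriv (convex_Icc a 1) ?_ ?_ ?_
    · have hAc : ContinuousOn A (Icc 0 1) := fun t ht => (hAderiv t ht).continuousWithinAt
      exact (hAc.mono (Icc_subset_Icc ha.le le_rfl)).log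
        (fun t ht => (Apos t (lt_of_lt_of_le ha ht.1) ht.2).ne')
    · rw [hint]
      intro t ht
      exact ((hderiv t ht).differentiableAt).differentiableWithinAt
    · rw [hint]
      intro s hs t ht hst
      rw [(hderiv s hs).deriv, (hderiv t ht).deriv]
      exact hratio.antitoneOn ⟨ha.trans hs.1, hs.2⟩ ⟨ha.trans ht.1, ht.2⟩ hst
  -- four point inequality for φ
  have hc : (0:ℝ) < b + h - a := by linarith
  have hsmem : a + h ∈ Icc a 1 := ⟨by linarith, by linarith⟩
  have hamem : a ∈ Icc a (1:ℝ) := ⟨le_rfl, ha1.le⟩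
  have hbhmem : b + h ∈ Icc a (1:ℝ) := ⟨by linarith, hbh1⟩
  have hbmem : b ∈ Icc a (1:ℝ) := ⟨hab, by linarith⟩
  set s : ℝ := h / (b + h - a) with hs
  set t : ℝ := (b - a) / (b + h - a) with ht
  have hs0 : 0 ≤ s := div_nonneg hh hc.le
  have ht0 : 0 ≤ t := div_nonneg (by linarith) hc.le
  have hst1 : t + s = 1 := by rw [ht, hs]; field_simp; ring
  have hst1' : s + t = 1 := by linarith
  have e1 : t * a + s * (b + h) = a + h := by rw [ht, hs]; field_simp; ring
  have e2 : s * a + t * (b + h) = b := by rw [ht, hs]; field_simp; ring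
  have i1 : t • φ a + s • φ (b + h) ≤ φ (a + h) := by
    have := hconc.2 hamem hbhmem ht0 hs0 hst1
    rwa [smul_eq_mul, smul_eq_mul, smul_eq_mul, smul_eq_mul, e1] at this
  have i2 : s • φ a + t • φ (b + h) ≤ φ b := by
    have := hconc.2 hamem hbhmem hs0 ht0 hst1'
    rwa [smul_eq_mul, smul_eq_mul, smul_eq_mul, smul_eq_mul, e2] at this
  have hsum : φ (b + h) + φ a ≤ φ (a + h) + φ b := by
    simp only [smul_eq_mul] at i1 i2
    have hexp : φ (b + h) + φ a =
        (t * φ a + s * φ (b + h)) + (s * φ a + t * φ (b + h)) := by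
      linear_combination (-(φ a + φ (b + h))) * hst1
    linarith [i1, i2, hexp.le, hexp.ge]
  have pa : 0 < A a := Apos a ha ha1.le
  have pb : 0 < A b := Apos b (ha.trans_le hab) (by linarith)
  have pah : 0 < A (a + h) := Apos _ (by linarith) (by linarith)
  have pbh : 0 < A (b + h) := Apos _ (by linarith) hbh1
  have : Real.log (A (b + h) * A a) ≤ Real.log (A (a + h) * A b) := by
    rw [Real.log_mul pbh.ne' pa.ne', Real.log_mul pah.ne' pb.ne']
    exact hsum
  exact (Real.log_le_log_iff (by positivity) (by positivity)).mp this

/-- Effective virtual value when consumers are addicted at level `z`: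
`R_z(x, λ) = (x + (1−λ)/λ)·A(min{λ + z, 1}) − γ/λ`. -/
noncomputable def Raddict (A : ℝ → ℝ) (γ z x l : ℝ) : ℝ :=
  (x + (1 - l) / l) * A (min (l + z) 1) - γ / l

/-- if `A'/A` is strictly decreasing on `(0,1)`, then for addiction
levels `0 < z < z' < A⁻¹(γ)` with `V*_z(x) > 0`, one has `V*_{z'}(x) > 0` and
`Λ*_z(x) ≥ Λ*_{z'}(x)`: more addiction leads to weakly lower certificate quality. -/
theorem stmt14
    (γ : ℝ) (A A' c c' cinv : ℝ → ℝ) (Lam : ℝ → ℝ → ℝ)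
    (hγ0 : 0 < γ) (hγ1 : γ < 1)
    (hA0 : A 0 = 0) (hA1 : A 1 = 1)
    (hAmono : StrictMonoOn A (Icc 0 1))
    (hAderiv : ∀ y ∈ Icc (0:ℝ) 1, HasDerivWithinAt A (A' y) (Icc 0 1) y)
    (hratio : StrictAntiOn (fun l => A' l / A l) (Ioo 0 1))
    (hc0 : c 0 = 0) (hc'0 : c' 0 = 0)
    (hcmono : StrictMonoOn c (Ici 0))
    (hcconv : StrictConvexOn ℝ (Ici 0) c)
    (hcderiv : ∀ v ∈ Ici (0:ℝ), HasDerivWithinAt c (c' v) (Ici 0) v)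
    (hc'top : Filter.Tendsto c' Filter.atTop Filter.atTop)
    (hcinv₁ : ∀ v, 0 ≤ v → cinv (c' v) = v)
    (hcinv₂ : ∀ y, 0 ≤ y → 0 ≤ cinv y ∧ c' (cinv y) = y)
    -- `Lam z x` is the largest maximizer of `λ ↦ R_z(x,λ)` over `(0,1]`
    (hLam : ∀ z : ℝ, 0 < z → A z < γ → ∀ x : ℝ, Lam z x ∈ Ioc (0:ℝ) 1 ∧
      (∀ l ∈ Ioc (0:ℝ) 1, Raddict A γ z x l ≤ Raddict A γ z x (Lam z x)) ∧
      (∀ l ∈ Ioc (0:ℝ) 1, Raddict A γ z x l = Raddict A γ z x (Lam z x) → l ≤ Lam z x)) :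
    -- `0 < z < z' < A⁻¹(γ)`, i.e. `0 < z < z' < 1` and `A z' < γ`
    ∀ x z z' : ℝ, 0 < z → z < z' → z' < 1 → A z' < γ →
      0 < cinv (max (Raddict A γ z x (Lam z x)) 0) →
      0 < cinv (max (Raddict A γ z' x (Lam z' x)) 0) ∧ Lam z' x ≤ Lam z x := by
  intro x z z' hz hzz' hz'1 hAz' hV
  have hcinv0 : cinv 0 = 0 := by
    have := hcinv₁ 0 le_rfl
    rwa [hc'0] at this
  have hAz : A z < γ := by
    refine lt_trans ?_ hAz'
    exact hAmono ⟨hz.le, by linarith⟩ ⟨by linarith, hz'1.le⟩ hzz'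
  obtain ⟨hlmem, hlmax, hllarge⟩ := hLam z hz hAz x
  obtain ⟨hl'mem, hl'max, hl'large⟩ := hLam z' (hz.trans hzz') hAz' x
  set l := Lam z x with hl
  set l' := Lam z' x with hl'
  clear_value l l'
  have hl0 : 0 < l := hlmem.1
  have hl1 : l ≤ 1 := hlmem.2
  have hl'0 : 0 < l' := hl'mem.1
  have hl'1 : l' ≤ 1 := hl'mem.2
  have Amono' : MonotoneOn A (Icc 0 1) := hAmono.monotoneOn
  have hminIcc : ∀ t : ℝ, 0 < t → min t 1 ∈ Icc (0:ℝ) 1 :=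
    fun t ht => ⟨le_of_lt (lt_min ht one_pos), min_le_right t 1⟩
  have hApos : ∀ t : ℝ, 0 < t → 0 < A (min t 1) := by
    intro t ht
    have := hAmono (left_mem_Icc.2 zero_le_one) (hminIcc t ht) (lt_min ht one_pos)
    rwa [hA0] at this
  -- positivity of R_z at its maximizer
  have hRz : 0 < Raddict A γ z x l := by
    by_contra hcon
    push_neg at hcon
    rw [max_eq_right hcon, hcinv0] at hV
    exact lt_irrefl 0 hV
  have hASpos : 0 < A (min (l + z) 1) := hApos _ (by linarith)
  have hγl : 0 < γ / l := div_pos hγ0 hl0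
  have hgl : 0 < x + (1 - l) / l := by
    rcases le_or_gt (x + (1 - l) / l) 0 with hc | hc
    · exfalso
      have : Raddict A γ z x l ≤ 0 := by
        unfold Raddict
        nlinarith [mul_nonpos_of_nonpos_of_nonneg hc hASpos.le]
      linarith
    · exact hc
  -- monotone step in z at fixed l
  have hSS' : A (min (l + z) 1) ≤ A (min (l + z') 1) :=
    Amono' (hminIcc _ (by linarith)) (hminIcc _ (by linarith))
      (min_le_min (by linarith) le_rfl)
  have hP1 : Raddict A γ z x l ≤ Raddict A γ z' x l := by
    unfold Raddict
    nlinarith [mul_le_mul_of_nonneg_left hSS' hgl.le]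
  have hP2 : Raddict A γ z' x l ≤ Raddict A γ z' x l' := hl'max l hlmem
  have hRz' : 0 < Raddict A γ z' x l' := lt_of_lt_of_le hRz (hP1.trans hP2)
  constructor
  · rw [max_eq_left hRz'.le]
    obtain ⟨h1, h2⟩ := hcinv₂ _ hRz'.le
    rcases h1.eq_or_lt with he | hlt
    · exfalso
      rw [← he, hc'0] at h2
      linarith
    · exact hlt
  · by_contra hcon
    push_neg at hcon
    -- hcon : l < l'
    have hAT'pos : 0 < A (min (l' + z') 1) := hApos _ (by linarith)
    have hγl' : 0 < γ / l' := div_pos hγ0 hl'0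
    have hgl' : 0 < x + (1 - l') / l' := by
      rcases le_or_gt (x + (1 - l') / l') 0 with hc2 | hc2
      · exfalso
        have : Raddict A γ z' x l' ≤ 0 := by
          unfold Raddict
          nlinarith [mul_nonpos_of_nonpos_of_nonneg hc2 hAT'pos.le]
        linarith
      · exact hc2
    have hstrict : Raddict A γ z x l' < Raddict A γ z x l := by
      rcases (hlmax l' hl'mem).eq_or_lt with he | hlt2
      · exact absurd (hllarge l' hl'mem he) (not_le.mpr hcon)
      · exact hlt2
    set S := min (l + z) 1 with hSdef
    set S' := min (l + z') 1 with hS'def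
    set T := min (l' + z) 1 with hTdef
    set T' := min (l' + z') 1 with hT'def
    have hS0 : 0 < S := lt_min (by linarith) one_pos
    have hST : S ≤ T := min_le_min (by linarith) le_rfl
    have hTT' : T ≤ T' := min_le_min (by linarith) le_rfl
    have hT'1 : T' ≤ 1 := min_le_right _ _
    have hsub : T' - T ≤ S' - S := by
      rw [hSdef, hS'def, hTdef, hT'def]
      simp only [min_def]
      split_ifs <;> linarith
    -- cross inequality via log-concavity
    have hcross : A T' * A S ≤ A S' * A T := by
      have key := logconc_aux A A' hA0 hAmono hAderiv hratio S T (T' - T)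
        hS0 hST (by linarith) (by linarith)
      rw [show T + (T' - T) = T' by ring] at key
      have hmid : A (S + (T' - T)) ≤ A S' := by
        refine Amono' ⟨by linarith, ?_⟩ (hminIcc _ (by linarith)) (by linarith)
        have : S' ≤ 1 := min_le_right _ _
        linarith
      have hATpos : 0 < A T := by
        rw [hTdef]; exact hApos _ (by linarith)
      calc A T' * A S ≤ A (S + (T' - T)) * A T := key
        _ ≤ A S' * A T := mul_le_mul_of_nonneg_right hmid hATpos.le
    -- assemble the contradiction
    have hATpos : 0 < A T := by rw [hTdef]; exact hApos _ (by linarith)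
    set gS := x + (1 - l) / l with hgSdef
    set gT := x + (1 - l') / l' with hgTdef
    clear_value gS gT
    clear_value S S' T T'
    have hE1 : gS * (A S' - A S) < gT * (A T' - A T) := by
      have d1 : Raddict A γ z' x l - Raddict A γ z x l = gS * (A S' - A S) := by
        rw [hgSdef, hSdef, hS'def]; unfold Raddict; ring
      have d2 : Raddict A γ z' x l' - Raddict A γ z x l' = gT * (A T' - A T) := by
        rw [hgTdef, hTdef, hT'def]; unfold Raddict; ring
      linarith [hP2, hstrict, d1.le, d1.ge, d2.le, d2.ge]
    have hE2 : gT * A T < gS * A S := by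
      have d3 : gT * A T = Raddict A γ z x l' + γ / l' := by
        rw [hgTdef, hTdef]; unfold Raddict; ring
      have d4 : gS * A S = Raddict A γ z x l + γ / l := by
        rw [hgSdef, hSdef]; unfold Raddict; ring
      have hγll' : γ / l' < γ / l := by
        apply div_lt_div_of_pos_left hγ0 hl0 hcon
      have := hstrict
      linarith [this, d3, d4, hγll']
    have hΔ : 0 ≤ A S' - A S := by
      have : A S ≤ A S' := hSS'
      linarith
    have k1 : gS * (A S' - A S) * A S < gT * (A T' - A T) * A S :=
      mul_lt_mul_of_pos_right hE1 hASpos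
    have k2 : gT * (A T' * A S) ≤ gT * (A S' * A T) :=
      mul_le_mul_of_nonneg_left hcross hgl'.le
    have k3 : gT * A T * (A S' - A S) ≤ gS * A S * (A S' - A S) :=
      mul_le_mul_of_nonneg_right hE2.le hΔ
    ring_nf at k1 k2 k3
    linarith [k1, k2, k3]
end

section
/- Let α > 0, λ ∈ (0,1], v_g ≥ 0 and v_b = ((1−λ)/λ)·v_g. Then the consumer welfare from v_g good views and v_b bad views marked with a certificate of quality λ, when the reading-cost distribution is A(q) = q^α, equals v_g·λ^α/(α+1); explicitly, v_g·∫₀^λ (1−q)·α·q^{α−1} dq − v_b·∫₀^λ q·α·q^{α−1} dq = v_g·λ^α/(α+1). In particular, consumer welfare is proportional to the engagement A(λ)·v_g = λ^α·v_g. -/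
open Set

/-! Against the density `α q^(α-1)` of `A(q) = q^α`, the good-view term integrates to
`λ^α - α/(α+1) λ^(α+1)` and the bad-view term to `α/(α+1) λ^(α+1)`. The ratio
`(1-λ)/λ` of bad to good views makes the two `λ^(α+1)` contributions combine into
`α/(α+1) λ^α`, leaving `λ^α/(α+1)`. -/

namespace Real

lemma mul_rpow_sub_one {y : ℝ} (hy : y ≠ 0) (x : ℝ) : x * x ^ (y - 1) = x ^ y := by
  rcases eq_or_ne x 0 with rfl | hx
  · simp [zero_rpow hy]
  · rw [rpow_sub_one hx, mul_div_cancel₀ _ hx]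

variable {α : ℝ}

lemma integral_rpow_density (hα : 0 < α) (l : ℝ) :
    ∫ q in (0:ℝ)..l, α * q ^ (α - 1) = l ^ α := by
  rw [intervalIntegral.integral_const_mul, integral_rpow (Or.inl (by linarith)),
    sub_add_cancel, zero_rpow hα.ne', sub_zero, mul_div_cancel₀ _ hα.ne']

lemma integral_mul_rpow_density (hα : 0 < α) (l : ℝ) :
    ∫ q in (0:ℝ)..l, q * (α * q ^ (α - 1)) = α / (α + 1) * l ^ (α + 1) := by
  simp_rw [mul_left_comm _ α, mul_rpow_sub_one hα.ne']
  rw [intervalIntegral.integral_const_mul, integral_rpow (Or.inl (by linarith)),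
    zero_rpow (by linarith), sub_zero, mul_div_assoc']
  ring

lemma integral_one_sub_mul_rpow_density (hα : 0 < α) (l : ℝ) :
    ∫ q in (0:ℝ)..l, (1 - q) * (α * q ^ (α - 1)) = l ^ α - α / (α + 1) * l ^ (α + 1) := by
  have hdensity : IntervalIntegrable (fun q : ℝ => α * q ^ (α - 1)) MeasureTheory.volume 0 l :=
    (intervalIntegral.intervalIntegrable_rpow' (by linarith)).const_mul α
  have hfirst_moment :
      IntervalIntegrable (fun q : ℝ => q * (α * q ^ (α - 1))) MeasureTheory.volume 0 l := by
    simp_rw [mul_left_comm _ α, mul_rpow_sub_one hα.ne']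
    exact (intervalIntegral.intervalIntegrable_rpow' (by linarith)).const_mul α
  simp_rw [sub_mul, one_mul]
  rw [intervalIntegral.integral_sub hdensity hfirst_moment, integral_rpow_density hα,
    integral_mul_rpow_density hα]

end Real

theorem stmt15_general
    (α l vg : ℝ) (hα : 0 < α) (hl : l ∈ Ioc (0:ℝ) 1) :
    vg * (∫ q in (0:ℝ)..l, (1 - q) * (α * q ^ (α - 1))) -
        ((1 - l) / l * vg) * (∫ q in (0:ℝ)..l, q * (α * q ^ (α - 1))) =
      vg * l ^ α / (α + 1) := by
  have hl0 : l ≠ 0 := hl.1.ne'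
  rw [Real.integral_one_sub_mul_rpow_density hα, Real.integral_mul_rpow_density hα,
    Real.rpow_add_one hl0]
  field_simp
  ring

/-- with reading-cost distribution `A(q) = q^α` (density `α·q^{α−1}`),
the consumer welfare from `v_g` good views and `v_b = ((1−λ)/λ)·v_g` bad views under a
certificate of quality `λ` equals `v_g·λ^α/(α+1)`, i.e. it is proportional to the
engagement `A(λ)·v_g = λ^α·v_g`. -/
theorem stmt15
    (α l vg : ℝ) (hα : 0 < α) (hl : l ∈ Ioc (0:ℝ) 1) (hvg : 0 ≤ vg) :
    vg * (∫ q in (0:ℝ)..l, (1 - q) * (α * q ^ (α - 1))) -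
        ((1 - l) / l * vg) * (∫ q in (0:ℝ)..l, q * (α * q ^ (α - 1))) =
      vg * l ^ α / (α + 1) :=
  stmt15_general α l vg hα hl
end

section
/- Fix λ_low, λ_high with 0 < λ_low < λ_high ≤ 1. Define θ̂ = min{θ ∈ [0,θ̄] : R(φ(θ), λ_high) ≥ R(φ(θ), λ_low)} if this set is nonempty, and θ̂ = θ̄ otherwise; define Λ^bin(θ) = λ_high if θ > θ̂, or if θ = θ̂ < θ̄, and Λ^bin(θ) = λ_low otherwise; and define V^bin(θ) = (c')⁻¹(max{R(φ(θ), Λ^bin(θ)), 0}). Then Λ^bin, V^bin and θ ↦ A(Λ^bin(θ))·V^bin(θ) are nondecreasing, and for every measurable pair (V, Λ) with V : [0,θ̄] → [0,∞), Λ : [0,θ̄] → {λ_low, λ_high}, θ ↦ A(Λ(θ))·V(θ) nondecreasing, and integrable integrands, ∫₀^{θ̄} [R(φ(θ), Λ(θ))·V(θ) − c(V(θ))]·f(θ) dθ ≤ ∫₀^{θ̄} [R(φ(θ), Λ^bin(θ))·V^bin(θ) − c(V^bin(θ))]·f(θ) dθ. -/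
open Set MeasureTheory

/-- Support line inequality for a convex differentiable function on `Ici 0`. -/
lemma support_line_aux (c c' : ℝ → ℝ)
    (hcconv : StrictConvexOn ℝ (Ici 0) c)
    (hcderiv : ∀ v ∈ Ici (0:ℝ), HasDerivWithinAt c (c' v) (Ici 0) v)
    {u v : ℝ} (hu : 0 ≤ u) (hv : 0 ≤ v) :
    c u + c' u * (v - u) ≤ c v := by
  rcases lt_trichotomy u v with h | rfl | h
  · have hs := (hcconv.convexOn).le_slope_of_hasDerivWithinAt hu hv h (hcderiv u hu)
    rw [slope_def_field] at hs
    have h2 : c' u * (v - u) ≤ c v - c u := by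
      rw [← le_div_iff₀ (sub_pos.2 h)]; exact hs
    linarith
  · simp
  · have hs := (hcconv.convexOn).slope_le_of_hasDerivWithinAt hv hu h (hcderiv u hu)
    rw [slope_def_field] at hs
    have h2 : c u - c v ≤ c' u * (u - v) := by
      rw [← div_le_iff₀ (sub_pos.2 h)]; exact hs
    nlinarith

/-- The derivative of a convex function on `Ici 0` is monotone there. -/
lemma deriv_mono_aux (c c' : ℝ → ℝ)
    (hcconv : StrictConvexOn ℝ (Ici 0) c)
    (hcderiv : ∀ v ∈ Ici (0:ℝ), HasDerivWithinAt c (c' v) (Ici 0) v)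
    {u v : ℝ} (hu : 0 ≤ u) (huv : u ≤ v) :
    c' u ≤ c' v := by
  have hv : 0 ≤ v := hu.trans huv
  have h1 := support_line_aux c c' hcconv hcderiv hu hv
  have h2 := support_line_aux c c' hcconv hcderiv hv hu
  rcases eq_or_lt_of_le huv with rfl | h
  · exact le_rfl
  · nlinarith

/-- the cutoff two-certificate mechanism `(V^bin, Λ^bin)` is monotone and
optimal among all measurable monotone mechanisms restricted to the two certificates
`{λ_low, λ_high}`. -/
theorem stmt16
    (θb γ llo lhi θhat : ℝ) (A A' c c' cinv φ f Lb : ℝ → ℝ)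
    (hθb : 0 < θb) (hγ0 : 0 < γ) (hγ1 : γ < 1) (hγθ : γ < θb)
    (hA0 : A 0 = 0) (hA1 : A 1 = 1)
    (hAmono : StrictMonoOn A (Icc 0 1))
    (hAderiv : ∀ y ∈ Icc (0:ℝ) 1, HasDerivWithinAt A (A' y) (Icc 0 1) y)
    (hc0 : c 0 = 0) (hc'0 : c' 0 = 0)
    (hcmono : StrictMonoOn c (Ici 0))
    (hcconv : StrictConvexOn ℝ (Ici 0) c)
    (hcderiv : ∀ v ∈ Ici (0:ℝ), HasDerivWithinAt c (c' v) (Ici 0) v)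
    (hc'top : Filter.Tendsto c' Filter.atTop Filter.atTop)
    (hcinv₁ : ∀ v, 0 ≤ v → cinv (c' v) = v)
    (hcinv₂ : ∀ y, 0 ≤ y → 0 ≤ cinv y ∧ c' (cinv y) = y)
    (hφcont : ContinuousOn φ (Icc 0 θb))
    (hφmono : StrictMonoOn φ (Icc 0 θb))
    (hfcont : ContinuousOn f (Icc 0 θb))
    (hfpos : ∀ θ ∈ Icc (0:ℝ) θb, 0 < f θ)
    (hllo : 0 < llo) (hlohi : llo < lhi) (hlhi : lhi ≤ 1)
    -- `θhat` is the least θ at which the high certificate dominates, and `θ̄` otherwise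
    (hθhat :
      ({θ ∈ Icc (0:ℝ) θb | R A γ (φ θ) llo ≤ R A γ (φ θ) lhi}.Nonempty →
        IsLeast {θ ∈ Icc (0:ℝ) θb | R A γ (φ θ) llo ≤ R A γ (φ θ) lhi} θhat) ∧
      (¬ {θ ∈ Icc (0:ℝ) θb | R A γ (φ θ) llo ≤ R A γ (φ θ) lhi}.Nonempty → θhat = θb))
    -- `Lb = Λ^bin`: high certificate strictly above the cutoff (and at an interior cutoff)
    (hLb : ∀ θ : ℝ,
      ((θhat < θ ∨ (θ = θhat ∧ θhat < θb)) → Lb θ = lhi) ∧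
      (¬ (θhat < θ ∨ (θ = θhat ∧ θhat < θb)) → Lb θ = llo))
    -- the integrand of the cutoff mechanism is integrable
    (hbinint : IntervalIntegrable
      (fun θ => (R A γ (φ θ) (Lb θ) * cinv (max (R A γ (φ θ) (Lb θ)) 0) -
        c (cinv (max (R A γ (φ θ) (Lb θ)) 0))) * f θ) volume 0 θb) :
    MonotoneOn Lb (Icc 0 θb) ∧
    MonotoneOn (fun θ => cinv (max (R A γ (φ θ) (Lb θ)) 0)) (Icc 0 θb) ∧
    MonotoneOn (fun θ => A (Lb θ) * cinv (max (R A γ (φ θ) (Lb θ)) 0)) (Icc 0 θb) ∧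
    ∀ V Λ : ℝ → ℝ, Measurable V → Measurable Λ →
      (∀ θ ∈ Icc (0:ℝ) θb, 0 ≤ V θ) →
      (∀ θ ∈ Icc (0:ℝ) θb, Λ θ = llo ∨ Λ θ = lhi) →
      MonotoneOn (fun θ => A (Λ θ) * V θ) (Icc 0 θb) →
      IntervalIntegrable
        (fun θ => (R A γ (φ θ) (Λ θ) * V θ - c (V θ)) * f θ) volume 0 θb →
      (∫ θ in (0:ℝ)..θb, (R A γ (φ θ) (Λ θ) * V θ - c (V θ)) * f θ) ≤
        ∫ θ in (0:ℝ)..θb,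
          (R A γ (φ θ) (Lb θ) * cinv (max (R A γ (φ θ) (Lb θ)) 0) -
            c (cinv (max (R A γ (φ θ) (Lb θ)) 0))) * f θ := by

  have hlo1 : llo ≤ 1 := hlohi.le.trans hlhi
  have hloI : llo ∈ Icc (0:ℝ) 1 := ⟨hllo.le, hlo1⟩
  have hhiI : lhi ∈ Icc (0:ℝ) 1 := ⟨(hllo.trans hlohi).le, hlhi⟩
  have h0I : (0:ℝ) ∈ Icc (0:ℝ) 1 := ⟨le_rfl, zero_le_one⟩
  have hAlo : 0 < A llo := by
    have := hAmono h0I hloI hllo; rwa [hA0] at this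
  have hAhi : 0 < A lhi := by
    have := hAmono h0I hhiI (hllo.trans hlohi); rwa [hA0] at this
  have hAlohi : A llo < A lhi := hAmono hloI hhiI hlohi
  -- R is monotone in the first argument when A l > 0
  have hRmono : ∀ l x1 x2, 0 < A l → x1 ≤ x2 → R A γ x1 l ≤ R A γ x2 l := by
    intro l x1 x2 hA h
    unfold R; nlinarith [mul_nonneg (sub_nonneg.2 h) hA.le]
  -- the advantage of the high certificate is monotone in x
  have hDmono : ∀ x1 x2, x1 ≤ x2 →
      R A γ x1 lhi - R A γ x1 llo ≤ R A γ x2 lhi - R A γ x2 llo := by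
    intro x1 x2 h
    unfold R; nlinarith [mul_nonneg (sub_nonneg.2 h) (sub_nonneg.2 hAlohi.le)]
  have hLbval : ∀ θ : ℝ, Lb θ = llo ∨ Lb θ = lhi := by
    intro θ
    by_cases hcond : θhat < θ ∨ (θ = θhat ∧ θhat < θb)
    · exact Or.inr ((hLb θ).1 hcond)
    · exact Or.inl ((hLb θ).2 hcond)
  -- where Lb = lhi, the high certificate is (weakly) better
  have key : ∀ θ ∈ Icc (0:ℝ) θb, Lb θ = lhi → R A γ (φ θ) llo ≤ R A γ (φ θ) lhi := by
    intro θ hθ hb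
    have hcond : θhat < θ ∨ (θ = θhat ∧ θhat < θb) := by
      by_contra hc
      rw [(hLb θ).2 hc] at hb
      exact hlohi.ne hb
    have hne : ({σ ∈ Icc (0:ℝ) θb | R A γ (φ σ) llo ≤ R A γ (φ σ) lhi}).Nonempty := by
      by_contra hc
      have hth := hθhat.2 hc
      rcases hcond with h1 | ⟨h1, h2⟩
      · rw [hth] at h1; exact absurd hθ.2 (not_le.2 h1)
      · rw [hth] at h2; exact absurd h2 (lt_irrefl θb)
    obtain ⟨⟨hhI, hhR⟩, hhlb⟩ := hθhat.1 hne
    rcases hcond with h1 | ⟨h1, h2⟩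
    · have hφ : φ θhat ≤ φ θ := (hφmono.monotoneOn) hhI hθ h1.le
      have := hDmono (φ θhat) (φ θ) hφ
      linarith
    · rw [h1]; exact hhR
  -- where Lb = llo (strictly below θb), the low certificate is (weakly) better
  have key2 : ∀ θ ∈ Icc (0:ℝ) θb, θ < θb → Lb θ = llo →
      R A γ (φ θ) lhi ≤ R A γ (φ θ) llo := by
    intro θ hθ hθlt hb
    have hnc : ¬(θhat < θ ∨ (θ = θhat ∧ θhat < θb)) := by
      intro hc
      rw [(hLb θ).1 hc] at hb
      exact hlohi.ne hb.symm
    push_neg at hnc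
    obtain ⟨hle, himp⟩ := hnc
    have hnotin : θ ∉ {σ ∈ Icc (0:ℝ) θb | R A γ (φ σ) llo ≤ R A γ (φ σ) lhi} := by
      intro hmem
      have hne : ({σ ∈ Icc (0:ℝ) θb | R A γ (φ σ) llo ≤ R A γ (φ σ) lhi}).Nonempty := ⟨θ, hmem⟩
      obtain ⟨⟨hhI, hhR⟩, hhlb⟩ := hθhat.1 hne
      have heq : θ = θhat := le_antisymm hle (hhlb hmem)
      have h3 := himp heq
      rw [← heq] at h3
      exact absurd hθlt (not_lt.2 h3)
    have : ¬ R A γ (φ θ) llo ≤ R A γ (φ θ) lhi := by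
      intro hR; exact hnotin ⟨hθ, hR⟩
    exact (not_le.1 this).le
  -- monotonicity of Lb
  have hLbmono : MonotoneOn Lb (Icc 0 θb) := by
    intro x hx y hy hxy
    rcases hLbval x with h | h
    · rw [h]
      rcases hLbval y with h' | h' <;> rw [h']
      exact hlohi.le
    · rw [h]
      have hcx : θhat < x ∨ (x = θhat ∧ θhat < θb) := by
        by_contra hc
        rw [(hLb x).2 hc] at h
        exact hlohi.ne h
      have hcy : θhat < y ∨ (y = θhat ∧ θhat < θb) := by
        rcases hcx with h1 | ⟨h1, h2⟩
        · exact Or.inl (h1.trans_le hxy)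
        · rcases eq_or_lt_of_le hxy with rfl | h3
          · exact Or.inr ⟨h1, h2⟩
          · exact Or.inl (h1 ▸ h3)
      rw [(hLb y).1 hcy]
  -- monotonicity of the effective virtual value of the cutoff mechanism
  have hRbinmono : MonotoneOn (fun θ => R A γ (φ θ) (Lb θ)) (Icc 0 θb) := by
    intro x hx y hy hxy
    have hφ : φ x ≤ φ y := (hφmono.monotoneOn) hx hy hxy
    rcases hLbval x with h | h <;> rcases hLbval y with h' | h' <;> simp only [h, h']
    · exact hRmono llo _ _ hAlo hφ
    · exact (hRmono llo _ _ hAlo hφ).trans (key y hy h')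
    · exfalso
      have := hLbmono hx hy hxy
      rw [h, h'] at this
      exact absurd this (not_le.2 hlohi)
    · exact hRmono lhi _ _ hAhi hφ
  -- cinv is monotone on nonnegative reals
  have hcinvmono : ∀ y1 y2, 0 ≤ y1 → y1 ≤ y2 → cinv y1 ≤ cinv y2 := by
    intro y1 y2 hy1 hy12
    by_contra hc
    push_neg at hc
    obtain ⟨h10, h1c⟩ := hcinv₂ y1 hy1
    obtain ⟨h20, h2c⟩ := hcinv₂ y2 (hy1.trans hy12)
    have := deriv_mono_aux c c' hcconv hcderiv h20 hc.le
    rw [h1c, h2c] at this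
    have : y1 = y2 := le_antisymm hy12 this
    rw [this] at hc
    exact lt_irrefl _ hc
  have hVmono : MonotoneOn (fun θ => cinv (max (R A γ (φ θ) (Lb θ)) 0)) (Icc 0 θb) := by
    intro x hx y hy hxy
    exact hcinvmono _ _ (le_max_right _ 0)
      (max_le_max (hRbinmono hx hy hxy) le_rfl)
  have hVnonneg : ∀ θ, 0 ≤ cinv (max (R A γ (φ θ) (Lb θ)) 0) := fun θ =>
    (hcinv₂ _ (le_max_right _ 0)).1
  have hALbmono : MonotoneOn (fun θ => A (Lb θ) * cinv (max (R A γ (φ θ) (Lb θ)) 0))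
      (Icc 0 θb) := by
    intro x hx y hy hxy
    have hmemx : Lb x ∈ Icc (0:ℝ) 1 := by rcases hLbval x with h | h <;> rw [h]
      <;> [exact hloI; exact hhiI]
    have hmemy : Lb y ∈ Icc (0:ℝ) 1 := by rcases hLbval y with h | h <;> rw [h]
      <;> [exact hloI; exact hhiI]
    have hAx : 0 ≤ A (Lb x) := by rcases hLbval x with h | h <;> rw [h]
      <;> [exact hAlo.le; exact hAhi.le]
    have hA : A (Lb x) ≤ A (Lb y) := (hAmono.monotoneOn) hmemx hmemy (hLbmono hx hy hxy)
    exact mul_le_mul hA (hVmono hx hy hxy) (hVnonneg x) (hAx.trans hA)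
  refine ⟨hLbmono, hVmono, hALbmono, ?_⟩
  intro V Λ hVmeas hΛmeas hVpos hΛval hmonoAV hint
  -- pointwise optimality of v ↦ cinv (max r 0) for the objective v ↦ r v - c v
  have hg : ∀ r v, 0 ≤ v → r * v - c v ≤ r * cinv (max r 0) - c (cinv (max r 0)) := by
    intro r v hv
    rcases le_or_gt r 0 with hr | hr
    · rw [max_eq_right hr]
      have h0 : cinv 0 = 0 := by
        have := hcinv₁ 0 le_rfl; rwa [hc'0] at this
      rw [h0, hc0]
      have hcv : c 0 ≤ c v := (hcmono.monotoneOn) (mem_Ici.2 le_rfl) (mem_Ici.2 hv) hv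
      rw [hc0] at hcv
      nlinarith [mul_nonpos_of_nonpos_of_nonneg hr hv]
    · rw [max_eq_left hr.le]
      obtain ⟨hvB0, hvBc⟩ := hcinv₂ r hr.le
      have hsl := support_line_aux c c' hcconv hcderiv hvB0 hv
      rw [hvBc] at hsl
      nlinarith
  -- pointwise comparison on [0, θb)
  have hptwise : ∀ θ ∈ Ico (0:ℝ) θb,
      (R A γ (φ θ) (Λ θ) * V θ - c (V θ)) * f θ ≤
      (R A γ (φ θ) (Lb θ) * cinv (max (R A γ (φ θ) (Lb θ)) 0) -
        c (cinv (max (R A γ (φ θ) (Lb θ)) 0))) * f θ := by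
    intro θ hθ
    have hθI : θ ∈ Icc (0:ℝ) θb := ⟨hθ.1, hθ.2.le⟩
    have hRle : R A γ (φ θ) (Λ θ) ≤ R A γ (φ θ) (Lb θ) := by
      rcases hΛval θ hθI with hl | hl <;> rcases hLbval θ with hb | hb <;>
        simp only [hl, hb]
      · exact le_rfl
      · exact key θ hθI hb
      · exact key2 θ hθI hθ.2 hb
      · exact le_rfl
    have hv := hVpos θ hθI
    have step1 : R A γ (φ θ) (Λ θ) * V θ - c (V θ) ≤
        R A γ (φ θ) (Lb θ) * V θ - c (V θ) := by
      nlinarith [mul_le_mul_of_nonneg_right hRle hv]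
    have step2 := hg (R A γ (φ θ) (Lb θ)) (V θ) hv
    exact mul_le_mul_of_nonneg_right (step1.trans step2) (hfpos θ hθI).le
  -- pass to the integral
  refine intervalIntegral.integral_mono_ae_restrict hθb.le hint hbinint ?_
  have h0 : ∀ᵐ θ ∂(volume.restrict (Icc (0:ℝ) θb)), θ ∈ Icc (0:ℝ) θb :=
    ae_restrict_mem measurableSet_Icc
  have h1 : ∀ᵐ (θ : ℝ) ∂(volume.restrict (Icc (0:ℝ) θb)), θ ≠ θb := by
    refine ae_restrict_of_ae ?_
    have hz : volume ({θb} : Set ℝ) = 0 := measure_singleton θb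
    rw [ae_iff]
    convert hz using 2
    ext x
    simp
  filter_upwards [h0, h1] with θ hθ hne
  exact hptwise θ ⟨hθ.1, lt_of_le_of_ne hθ.2 hne⟩
end

section
/- The engagement-maximizing planner's pointwise problem is solved by perfect certification and egalitarian views: for every λ ∈ (0,1] and every v ≥ 0, A(λ)·v − γ·v/λ − c(v) ≤ (1−γ)·v* − c(v*), where v* = (c')⁻¹(1−γ). That is, (λ, v) = (1, (c')⁻¹(1−γ)) maximizes the planner's objective A(λ)·v − γ·v/λ − c(v) over (0,1] × [0,∞). -/
open Set

/-- Tangent line inequality for a convex function with derivative within `Ici 0`. -/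
lemma tangent_le (c c' : ℝ → ℝ) (hcconv : ConvexOn ℝ (Ici 0) c)
    (hcderiv : ∀ v ∈ Ici (0:ℝ), HasDerivWithinAt c (c' v) (Ici 0) v)
    {x v : ℝ} (hx : 0 ≤ x) (hv : 0 ≤ v) :
    c x + c' x * (v - x) ≤ c v := by
  rcases lt_trichotomy v x with h | h | h
  · have := hcconv.slope_le_of_hasDerivWithinAt hv hx h (hcderiv x hx)
    rw [slope_def_field, div_le_iff₀ (by linarith)] at this
    nlinarith
  · simp [h]
  · have := hcconv.le_slope_of_hasDerivWithinAt hx hv h (hcderiv x hx)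
    rw [slope_def_field, le_div_iff₀ (by linarith)] at this
    nlinarith

/-- the engagement-maximizing planner's pointwise problem
`max A(λ)·v − γ·v/λ − c(v)` over `(0,1] × [0,∞)` is solved by perfect certification
`λ = 1` together with the egalitarian views `v* = (c')⁻¹(1 − γ)`. -/
theorem stmt18
    (γ : ℝ) (A c c' cinv : ℝ → ℝ)
    (hγ0 : 0 < γ) (hγ1 : γ < 1)
    (hA0 : A 0 = 0) (hA1 : A 1 = 1)
    (hAmono : StrictMonoOn A (Icc 0 1))
    (hAdiff : DifferentiableOn ℝ A (Icc 0 1))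
    (hc0 : c 0 = 0) (hc'0 : c' 0 = 0)
    (hcmono : StrictMonoOn c (Ici 0))
    (hcconv : StrictConvexOn ℝ (Ici 0) c)
    (hcderiv : ∀ v ∈ Ici (0:ℝ), HasDerivWithinAt c (c' v) (Ici 0) v)
    (hc'top : Filter.Tendsto c' Filter.atTop Filter.atTop)
    (hcinv₁ : ∀ v, 0 ≤ v → cinv (c' v) = v)
    (hcinv₂ : ∀ y, 0 ≤ y → 0 ≤ cinv y ∧ c' (cinv y) = y) :
    ∀ l ∈ Ioc (0:ℝ) 1, ∀ v : ℝ, 0 ≤ v →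
      A l * v - γ * v / l - c v ≤ (1 - γ) * cinv (1 - γ) - c (cinv (1 - γ)) := by
  intro l hl v hv
  obtain ⟨hl0, hl1⟩ := hl
  obtain ⟨hw0, hw⟩ := hcinv₂ (1 - γ) (by linarith)
  set w := cinv (1 - γ) with hwdef
  -- A l ≤ 1
  have hAl : A l ≤ 1 := by
    rcases eq_or_lt_of_le hl1 with h | h
    · rw [h, hA1]
    · have := hAmono ⟨hl0.le, hl1⟩ ⟨zero_le_one, le_refl 1⟩ h
      linarith [hA1]
  -- γ * v ≤ γ * v / l
  have hdiv : γ * v ≤ γ * v / l := by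
    rw [le_div_iff₀ hl0]
    nlinarith [mul_nonneg (mul_nonneg hγ0.le hv) (sub_nonneg.mpr hl1)]
  -- step 1: LHS ≤ (1-γ)*v - c v
  have h1 : A l * v - γ * v / l - c v ≤ (1 - γ) * v - c v := by
    nlinarith
  -- step 2: tangent inequality at w
  have h2 := tangent_le c c' hcconv.convexOn hcderiv hw0 hv
  rw [hw] at h2
  linarith
end
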